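/- arXiv:2407.07765 — 5 statements merged into one kernel-verified Lean document; each statement's English description precedes it below -/
import Mathlib

section
/- For every vertex coloring of a complete binary tree of depth n with k colors c_1,...,c_k, and every natural numbers a_1,...,a_k with a_1+...+a_k = n, there exists an index i and a c_i-monochromatic complete subtree of depth a_i (where a subtree preserves the left/right descendant relations). -/
/-- Vertices of the complete binary tree are bit strings (`List Bool`);
a vertex has depth = its length; the tree of depth `n` consists of strings of length ≤ n.
`SubtreeMap n d f` : `f` embeds the complete binary tree of depth `d` as a subtree
(preserving left/right descendant relations) of the complete binary tree of depth `n`. -/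
def SubtreeMap (n d : ℕ) (f : List Bool → List Bool) : Prop :=
  (∀ s : List Bool, s.length ≤ d → (f s).length ≤ n) ∧
  (∀ s : List Bool, ∀ b : Bool, s.length < d → f s ++ [b] <+: f (s ++ [b]))

/-- Pigeonhole principle for trees: for every `k`-coloring of the vertices of the complete
binary tree of depth `n` and naturals `a 1,…,a k` summing to `n`, some color `i` admits an
`i`-monochromatic complete subtree of depth `a i`. -/
theorem pigeonhole_for_trees (n k : ℕ) (hk : 0 < k)
    (χ : List Bool → Fin k) (a : Fin k → ℕ) (ha : ∑ i, a i = n) :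
    ∃ i : Fin k, ∃ f : List Bool → List Bool, SubtreeMap n (a i) f ∧
      ∀ s : List Bool, s.length ≤ a i → χ (f s) = i := by
  induction n generalizing χ a with
  | zero =>
    have h0 : a (χ []) = 0 := (Finset.sum_eq_zero_iff.mp ha) (χ []) (Finset.mem_univ _)
    refine ⟨χ [], fun _ => [], ⟨?_, ?_⟩, ?_⟩
    · intro s _; simp
    · intro s b hs; rw [h0] at hs; exact absurd hs (Nat.not_lt_zero _)
    · intro s hs; rfl
  | succ n ih =>
    by_cases h0 : a (χ []) = 0
    · refine ⟨χ [], fun _ => [], ⟨?_, ?_⟩, ?_⟩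
      · intro s _; simp
      · intro s b hs; rw [h0] at hs; exact absurd hs (Nat.not_lt_zero _)
      · intro s hs; rfl
    · set i0 := χ [] with hi0
      set a' := Function.update a i0 (a i0 - 1) with ha'def
      have hm : a' i0 = a i0 - 1 := Function.update_self _ _ _
      have hsum : ∑ i, a' i = n := by
        rw [ha'def, Finset.sum_update_of_mem (Finset.mem_univ i0)]
        have h1 : (∑ x ∈ Finset.univ \ {i0}, a x) + a i0 = n + 1 := by
          rw [← Finset.sum_eq_sum_sdiff_singleton_add (Finset.mem_univ i0)]; exact ha
        omega
      obtain ⟨iL, fL, ⟨hL1, hL2⟩, hLm⟩ := ih (fun s => χ (false :: s)) a' hsum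
      obtain ⟨iR, fR, ⟨hR1, hR2⟩, hRm⟩ := ih (fun s => χ (true :: s)) a' hsum
      by_cases hLe : iL = i0
      · by_cases hRe : iR = i0
        · -- both children give color i0 : combine with the root
          refine ⟨i0, fun s => match s with
            | [] => []
            | false :: t => false :: fL t
            | true :: t => true :: fR t, ⟨?_, ?_⟩, ?_⟩
          · intro s hs
            match s with
            | [] => simp
            | false :: t =>
              have ht : t.length ≤ a' iL := by
                rw [hLe, hm]; simp only [List.length_cons] at hs; omega
              have := hL1 t ht
              simp only [List.length_cons]; omega
            | true :: t =>
              have ht : t.length ≤ a' iR := by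
                rw [hRe, hm]; simp only [List.length_cons] at hs; omega
              have := hR1 t ht
              simp only [List.length_cons]; omega
          · intro s b hs
            match s with
            | [] =>
              cases b
              · exact ⟨fL [], rfl⟩
              · exact ⟨fR [], rfl⟩
            | false :: t =>
              have ht : t.length < a' iL := by
                rw [hLe, hm]; simp only [List.length_cons] at hs; omega
              obtain ⟨u, hu⟩ := hL2 t b ht
              exact ⟨u, by simp [← hu]⟩
            | true :: t =>
              have ht : t.length < a' iR := by
                rw [hRe, hm]; simp only [List.length_cons] at hs; omega
              obtain ⟨u, hu⟩ := hR2 t b ht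
              exact ⟨u, by simp [← hu]⟩
          · intro s hs
            match s with
            | [] => rfl
            | false :: t =>
              have ht : t.length ≤ a' iL := by
                rw [hLe, hm]; simp only [List.length_cons] at hs; omega
              have := hLm t ht
              rw [← hLe]; exact this
            | true :: t =>
              have ht : t.length ≤ a' iR := by
                rw [hRe, hm]; simp only [List.length_cons] at hs; omega
              have := hRm t ht
              rw [← hRe]; exact this
        · -- right child gives a different color
          have haR : a' iR = a iR := Function.update_of_ne hRe _ _
          refine ⟨iR, fun s => true :: fR s, ⟨?_, ?_⟩, ?_⟩
          · intro s hs
            have := hR1 s (by rw [haR]; exact hs)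
            simp only [List.length_cons]; omega
          · intro s b hs
            obtain ⟨u, hu⟩ := hR2 s b (by rw [haR]; exact hs)
            exact ⟨u, by simp [← hu]⟩
          · intro s hs
            exact hRm s (by rw [haR]; exact hs)
      · -- left child gives a different color
        have haL : a' iL = a iL := Function.update_of_ne hLe _ _
        refine ⟨iL, fun s => false :: fL s, ⟨?_, ?_⟩, ?_⟩
        · intro s hs
          have := hL1 s (by rw [haL]; exact hs)
          simp only [List.length_cons]; omega
        · intro s b hs
          obtain ⟨u, hu⟩ := hL2 s b (by rw [haL]; exact hs)
          exact ⟨u, by simp [← hu]⟩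
        · intro s hs
          exact hLm s (by rw [haL]; exact hs)
end

section
/- Fix τ ∈ {L, R} and let d, k be natural numbers. If n ≥ 2^(d·k·log₂(2k)), then for every complete binary tree T of depth n and every coloring with k colors of all τ-pairs of T (pairs {u,v} where one vertex is a left descendant of the other if τ = L, or a right descendant if τ = R), T admits a complete subtree of depth d in which all τ-pairs have the same color. -/
namespace RamseyAux

/-- A rooted subtree map: embeds the complete binary tree of depth `d` into the
subtree of positions extending `q`, using at most `m` additional levels. -/
def RMap (q : List Bool) (m d : ℕ) (f : List Bool → List Bool) : Prop :=
  (∀ s : List Bool, s.length ≤ d → q <+: f s ∧ (f s).length ≤ q.length + m) ∧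
  (∀ s : List Bool, ∀ b : Bool, s.length < d → f s ++ [b] <+: f (s ++ [b]))

theorem rmap_of_subtree {n d : ℕ} {f : List Bool → List Bool} (h : SubtreeMap n d f) :
    RMap [] n d f :=
  ⟨fun s hs => ⟨List.nil_prefix, by simpa using h.1 s hs⟩, h.2⟩

theorem subtree_of_rmap {n d : ℕ} {f : List Bool → List Bool} (h : RMap [] n d f) :
    SubtreeMap n d f :=
  ⟨fun s hs => by simpa using (h.1 s hs).2, h.2⟩

theorem RMap.append_mono {q : List Bool} {m d : ℕ} {f : List Bool → List Bool}
    (h : RMap q m d f) :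
    ∀ (r s : List Bool), (s ++ r).length ≤ d → f s <+: f (s ++ r) := by
  intro r
  induction r using List.reverseRecOn with
  | nil => intro s _; simp
  | append_singleton r b ih =>
    intro s hlen
    simp only [List.length_append, List.length_cons, List.length_nil] at hlen
    have h1 : (s ++ r).length ≤ d := by simp only [List.length_append]; omega
    have h2 : (s ++ r).length < d := by simp only [List.length_append]; omega
    have h3 := h.2 (s ++ r) b h2
    have h4 : f s <+: f (s ++ r ++ [b]) :=
      (ih s h1).trans ((List.prefix_append _ _).trans h3)
    simpa [List.append_assoc] using h4

theorem RMap.prefix_mono {q : List Bool} {m d : ℕ} {f : List Bool → List Bool}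
    (h : RMap q m d f) {s t : List Bool} (hst : s <+: t) (ht : t.length ≤ d) :
    f s <+: f t := by
  obtain ⟨r, rfl⟩ := hst
  exact h.append_mono r s ht

theorem RMap.snoc_mono {q : List Bool} {m d : ℕ} {f : List Bool → List Bool}
    (h : RMap q m d f) {s t : List Bool} {b : Bool}
    (hst : s ++ [b] <+: t) (ht : t.length ≤ d) : f s ++ [b] <+: f t := by
  have hs : s.length < d := by
    have := hst.length_le
    simp only [List.length_append, List.length_cons, List.length_nil] at this
    omega
  exact (h.2 s b hs).trans (h.prefix_mono hst ht)

theorem snoc_prefix_unique {s t : List Bool} {x y : Bool}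
    (h1 : s ++ [x] <+: t) (h2 : s ++ [y] <+: t) : x = y := by
  obtain ⟨r1, e1⟩ := h1
  obtain ⟨r2, e2⟩ := h2
  rw [← e2] at e1
  rw [List.append_assoc, List.append_assoc] at e1
  have e3 := List.append_cancel_left e1
  simp only [List.cons_append, List.nil_append] at e3
  exact (List.cons.injEq _ _ _ _).mp e3 |>.1

theorem tricho : ∀ (s t : List Bool), t <+: s ∨ (∃ y, s ++ [y] <+: t) ∨
    ∃ (w : List Bool) (y : Bool), w ++ [y] <+: s ∧ w ++ [!y] <+: t := by
  intro s
  induction s with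
  | nil =>
    intro t
    cases t with
    | nil => exact Or.inl List.prefix_rfl
    | cons b t' => exact Or.inr (Or.inl ⟨b, ⟨t', rfl⟩⟩)
  | cons a s' ih =>
    intro t
    cases t with
    | nil => exact Or.inl (List.nil_prefix)
    | cons b t' =>
      by_cases hab : a = b
      · subst hab
        rcases ih t' with h | ⟨y, h⟩ | ⟨w, y, h1, h2⟩
        · exact Or.inl (List.cons_prefix_cons.mpr ⟨rfl, h⟩)
        · refine Or.inr (Or.inl ⟨y, ?_⟩)
          rw [List.cons_append]
          exact List.cons_prefix_cons.mpr ⟨rfl, h⟩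
        · refine Or.inr (Or.inr ⟨a :: w, y, ?_, ?_⟩)
          · rw [List.cons_append]; exact List.cons_prefix_cons.mpr ⟨rfl, h1⟩
          · rw [List.cons_append]; exact List.cons_prefix_cons.mpr ⟨rfl, h2⟩
      · refine Or.inr (Or.inr ⟨[], a, ⟨s', rfl⟩, ?_⟩)
        have hb : b = !a := by cases a <;> cases b <;> simp_all
        subst hb
        exact ⟨t', rfl⟩

theorem RMap.reflect {q : List Bool} {m d : ℕ} {f : List Bool → List Bool}
    (h : RMap q m d f) {s t : List Bool} {x : Bool}
    (hs : s.length ≤ d) (ht : t.length ≤ d) (hp : f s ++ [x] <+: f t) :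
    s ++ [x] <+: t := by
  rcases tricho s t with h1 | ⟨y, hy⟩ | ⟨w, y, h1, h2⟩
  · exfalso
    have h2 : f t <+: f s := h.prefix_mono h1 hs
    have h3 := hp.length_le
    have h4 := h2.length_le
    simp only [List.length_append, List.length_cons, List.length_nil] at h3
    omega
  · have h5 : f s ++ [y] <+: f t := h.snoc_mono hy ht
    have h6 : y = x := snoc_prefix_unique h5 hp
    rwa [h6] at hy
  · exfalso
    have hw1 : f w ++ [y] <+: f s := h.snoc_mono h1 hs
    have hw2 : f w ++ [!y] <+: f t := h.snoc_mono h2 ht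
    have hfs : f s <+: f t := (List.prefix_append _ _).trans hp
    have h7 : y = !y := snoc_prefix_unique (hw1.trans hfs) hw2
    simp at h7

theorem RMap.lift {q : List Bool} {m d : ℕ} {f : List Bool → List Bool} {b : Bool}
    (h : RMap (q ++ [b]) m d f) : RMap q (m + 1) d f := by
  constructor
  · intro s hs
    obtain ⟨h1, h2⟩ := h.1 s hs
    refine ⟨(List.prefix_append _ _).trans h1, ?_⟩
    simp only [List.length_append, List.length_cons, List.length_nil] at h2
    omega
  · exact h.2

theorem RMap.comp {q : List Bool} {m D d : ℕ} {g h' : List Bool → List Bool}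
    (hg : RMap q m D g) (hh : RMap [] D d h') :
    RMap q m d (fun s => g (h' s)) := by
  constructor
  · intro s hs
    have h1 := (hh.1 s hs).2
    simp only [List.length_nil, Nat.zero_add] at h1
    exact hg.1 (h' s) h1
  · intro s b hs
    have hlen : (s ++ [b]).length ≤ d := by
      simp only [List.length_append, List.length_cons, List.length_nil]
      omega
    have h1 : h' s ++ [b] <+: h' (s ++ [b]) := hh.2 s b hs
    have h2 : (h' (s ++ [b])).length ≤ D := by
      have := (hh.1 (s ++ [b]) hlen).2
      simpa using this
    exact hg.snoc_mono h1 h2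

/-- building block: root plus two child maps. -/
def nodeFun (F : Bool → List Bool → List Bool) (q : List Bool) : List Bool → List Bool
  | [] => q
  | b :: s' => F b s'

theorem RMap.node {q : List Bool} {m d : ℕ} {F : Bool → List Bool → List Bool}
    (hF : ∀ b, RMap (q ++ [b]) m d (F b)) :
    RMap q (m + 1) (d + 1) (nodeFun F q) := by
  constructor
  · intro s hs
    cases s with
    | nil => exact ⟨List.prefix_rfl, Nat.le_add_right _ _⟩
    | cons b s' =>
      have hs' : s'.length ≤ d := by
        simp only [List.length_cons] at hs; omega
      have h1 := (hF b).1 s' hs'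
      refine ⟨(List.prefix_append _ _).trans h1.1, ?_⟩
      have := h1.2
      simp only [List.length_append, List.length_cons, List.length_nil] at this
      simpa [nodeFun] using by omega
  · intro s b hs
    cases s with
    | nil =>
      have h1 := ((hF b).1 [] (Nat.zero_le _)).1
      simpa [nodeFun] using h1
    | cons b' s' =>
      have hs' : s'.length < d := by
        simp only [List.length_cons] at hs; omega
      have h1 := (hF b').2 s' b hs'
      simpa [nodeFun] using h1

theorem RMap.const (q : List Bool) (m : ℕ) : RMap q m 0 (fun _ => q) := by
  constructor
  · intro s _; exact ⟨List.prefix_rfl, Nat.le_add_right _ _⟩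
  · intro s b hs; exact absurd hs (Nat.not_lt_zero _)

theorem sum_update_succ {k : ℕ} (e : Fin k → ℕ) (c : Fin k) (h : 1 ≤ e c) :
    (∑ x, (Function.update e c (e c - 1) x + 1)) + 1 = ∑ x, (e x + 1) := by
  classical
  have h1 : ∀ g : Fin k → ℕ,
      (∑ x, (g x + 1)) = (g c + 1) + ∑ x ∈ Finset.univ.erase c, (g x + 1) :=
    fun g => (Finset.add_sum_erase _ (fun x => g x + 1) (Finset.mem_univ c)).symm
  rw [h1 (Function.update e c (e c - 1)), h1 e]
  have h2 : (∑ x ∈ Finset.univ.erase c, (Function.update e c (e c - 1) x + 1))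
      = ∑ x ∈ Finset.univ.erase c, (e x + 1) :=
    Finset.sum_congr rfl fun x hx => by
      rw [Function.update_of_ne (Finset.ne_of_mem_erase hx)]
  rw [h2, Function.update_self]
  omega

theorem sum_update_pred {k : ℕ} (D : Fin k → ℕ) (c : Fin k) (h : 1 ≤ D c) {T : ℕ}
    (hsum : (∑ x, D x) = T + 1) : (∑ x, Function.update D c (D c - 1) x) = T := by
  classical
  have h1 : ∀ g : Fin k → ℕ, (∑ x, g x) = g c + ∑ x ∈ Finset.univ.erase c, g x :=
    fun g => (Finset.add_sum_erase _ g (Finset.mem_univ c)).symm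
  rw [h1 D] at hsum
  rw [h1 (Function.update D c (D c - 1))]
  have h2 : (∑ x ∈ Finset.univ.erase c, Function.update D c (D c - 1) x)
      = ∑ x ∈ Finset.univ.erase c, D x :=
    Finset.sum_congr rfl fun x hx => Function.update_of_ne (Finset.ne_of_mem_erase hx) _ _
  rw [h2, Function.update_self]
  omega

/-- Vertex Ramsey for trees, vector form: if `∑ (e c + 1) ≤ m + 1`, any vertex coloring
of the positions extending `q` admits, for some color `c`, a monochromatic subtree map
of depth `e c`. -/
theorem vertexRamsey {k : ℕ} (col : List Bool → Fin k) :
    ∀ (m : ℕ) (q : List Bool) (e : Fin k → ℕ),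
      (∑ c, (e c + 1)) ≤ m + 1 →
      ∃ (c : Fin k) (f : List Bool → List Bool),
        RMap q m (e c) f ∧ ∀ s, s.length ≤ e c → col (f s) = c := by
  intro m
  induction m with
  | zero =>
    intro q e hsum
    have h0 : e (col q) = 0 := by
      have h1 : e (col q) + 1 ≤ ∑ c, (e c + 1) :=
        Finset.single_le_sum (f := fun c => e c + 1) (fun i _ => Nat.zero_le _) (Finset.mem_univ (col q))
      omega
    refine ⟨col q, fun _ => q, ?_, fun s _ => rfl⟩
    rw [h0]; exact RMap.const q 0
  | succ m ih =>
    intro q e hsum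
    by_cases h0 : e (col q) = 0
    · refine ⟨col q, fun _ => q, ?_, fun s _ => rfl⟩
      rw [h0]; exact RMap.const q (m + 1)
    · have h1 : 1 ≤ e (col q) := Nat.one_le_iff_ne_zero.mpr h0
      have hkey := sum_update_succ e (col q) h1
      have hsum' : (∑ c, (Function.update e (col q) (e (col q) - 1) c + 1)) ≤ m + 1 := by
        omega
      obtain ⟨cL, fL, hL, hLc⟩ := ih (q ++ [false]) _ hsum'
      obtain ⟨cR, fR, hR, hRc⟩ := ih (q ++ [true]) _ hsum'
      by_cases hcL : cL = col q
      · by_cases hcR : cR = col q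
        · -- combine both children with root q
          obtain ⟨j, hj⟩ : ∃ j, e (col q) = j + 1 := ⟨e (col q) - 1, by omega⟩
          have hupd : Function.update e (col q) (e (col q) - 1) (col q) = j := by
            rw [Function.update_self]; omega
          have hLj : Function.update e (col q) (e (col q) - 1) cL = j := by
            rw [hcL, hupd]
          have hRj : Function.update e (col q) (e (col q) - 1) cR = j := by
            rw [hcR, hupd]
          rw [hLj] at hL hLc
          rw [hRj] at hR hRc
          refine ⟨col q, nodeFun (fun b => bif b then fR else fL) q, ?_, ?_⟩
          · rw [hj]
            refine RMap.node (fun b => ?_)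
            cases b
            · exact hL
            · exact hR
          · intro s hs
            cases s with
            | nil => rfl
            | cons b s' =>
              rw [hj] at hs
              have hs' : s'.length ≤ j := by
                simp only [List.length_cons] at hs; omega
              cases b
              · exact (hLc s' hs').trans hcL
              · exact (hRc s' hs').trans hcR
        · have hne : Function.update e (col q) (e (col q) - 1) cR = e cR :=
            Function.update_of_ne hcR _ _
          rw [hne] at hR hRc
          exact ⟨cR, fR, hR.lift, hRc⟩
      · have hne : Function.update e (col q) (e (col q) - 1) cL = e cL :=
          Function.update_of_ne hcL _ _
        rw [hne] at hL hLc
        exact ⟨cL, fL, hL.lift, hLc⟩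

def Rfun (k : ℕ) : ℕ → ℕ
  | 0 => 0
  | (j + 1) => k * (Rfun k j + 1)

theorem bool_ne_eq_not {a b : Bool} (h : a ≠ b) : a = !b := by
  cases a <;> cases b <;> simp_all

def branchFun (τ : Bool) (A B : List Bool → List Bool) : Bool → List Bool → List Bool :=
  fun b => if b = τ then A else B

theorem branchFun_pos (τ : Bool) (A B : List Bool → List Bool) : branchFun τ A B τ = A := by
  simp [branchFun]

theorem branchFun_neg (τ : Bool) (A B : List Bool → List Bool) {b : Bool} (h : b ≠ τ) :
    branchFun τ A B b = B := by
  simp [branchFun, h]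

theorem trivCase {k : ℕ} (τ : Bool) (N : ℕ) (χ : List Bool → List Bool → Fin k)
    (D : Fin k → ℕ) (c : Fin k) (hc : D c = 0) :
    ∃ (c : Fin k) (h : List Bool → List Bool), SubtreeMap N (D c) h ∧
      ∀ s t : List Bool, s.length ≤ D c → t.length ≤ D c →
        h s ++ [τ] <+: h t → χ (h s) (h t) = c := by
  refine ⟨c, fun _ => [], ⟨?_, ?_⟩, ?_⟩
  · intro s _; simp
  · intro s b hs; rw [hc] at hs; exact absurd hs (Nat.not_lt_zero _)
  · intro s t _ _ hp
    exact absurd hp.length_le (by simp)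

/-- Main lemma: multicolor vector version of the tree Ramsey theorem for τ-pairs. -/
theorem mainLemma (τ : Bool) {k : ℕ} :
    ∀ (T : ℕ) (D : Fin k → ℕ) (N : ℕ) (χ : List Bool → List Bool → Fin k),
      (∑ c, D c) = T → Rfun k T ≤ N →
      ∃ (c : Fin k) (h : List Bool → List Bool), SubtreeMap N (D c) h ∧
        ∀ s t : List Bool, s.length ≤ D c → t.length ≤ D c →
          h s ++ [τ] <+: h t → χ (h s) (h t) = c := by
  intro T
  induction T with
  | zero =>
    intro D N χ hsum _
    have hc : D (χ [] []) = 0 := (Finset.sum_eq_zero_iff.mp hsum) (χ [] []) (Finset.mem_univ _)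
    exact trivCase τ N χ D (χ [] []) hc
  | succ T ih =>
    intro D N χ hsum hN
    by_cases hex : ∃ c, D c = 0
    · obtain ⟨c, hc⟩ := hex
      exact trivCase τ N χ D c hc
    · push_neg at hex
      have hk1 : 1 ≤ k := by
        rcases Nat.eq_zero_or_pos k with h | h
        · subst h; simp at hsum
        · exact h
      have hRsucc : Rfun k (T + 1) = k * (Rfun k T + 1) := rfl
      have hpos : 0 < k * (Rfun k T + 1) := Nat.mul_pos (by omega) (Nat.succ_pos _)
      have hN1 : 1 ≤ N := by omega
      obtain ⟨M, rfl⟩ : ∃ M, N = M + 1 := ⟨N - 1, by omega⟩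
      have hVsum : (∑ _c : Fin k, (Rfun k T + 1)) ≤ M + 1 := by
        rw [Finset.sum_const, Finset.card_univ, Fintype.card_fin, smul_eq_mul]
        omega
      obtain ⟨c, g, hg, hgcol⟩ :=
        vertexRamsey (fun w => χ [] w) M [τ] (fun _ => Rfun k T) hVsum
      have hdc1 : 1 ≤ D c := Nat.one_le_iff_ne_zero.mpr (hex c)
      obtain ⟨dc, hdc⟩ : ∃ dc, D c = dc + 1 := ⟨D c - 1, by omega⟩
      have hsum' : (∑ x, Function.update D c (D c - 1) x) = T := sum_update_pred D c hdc1 hsum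
      have hRTM : Rfun k T ≤ M := by
        have h1 : Rfun k T + 1 ≤ k * (Rfun k T + 1) := Nat.le_mul_of_pos_left _ (by omega)
        omega
      obtain ⟨c₀, h₀, hh₀, hm₀⟩ := ih (Function.update D c (D c - 1)) M
        (fun u v => χ ((!τ) :: u) ((!τ) :: v)) hsum' hRTM
      by_cases hc₀ : c₀ = c
      case neg =>
        have hDc₀ : Function.update D c (D c - 1) c₀ = D c₀ := Function.update_of_ne hc₀ _ _
        rw [hDc₀] at hh₀ hm₀
        refine ⟨c₀, fun s => (!τ) :: h₀ s, ⟨?_, ?_⟩, ?_⟩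
        · intro s hs
          have := hh₀.1 s hs
          simp only [List.length_cons]
          omega
        · intro s b hs
          have h2 := hh₀.2 s b hs
          simp only [List.cons_append]
          exact List.cons_prefix_cons.mpr ⟨rfl, h2⟩
        · intro s t hs ht hp
          simp only [List.cons_append, List.cons_prefix_cons] at hp
          exact hm₀ s t hs ht hp.2
      case pos =>
        rw [hc₀] at hh₀ hm₀
        have hupd : Function.update D c (D c - 1) c = dc := by
          rw [Function.update_self]; omega
        rw [hupd] at hh₀ hm₀
        obtain ⟨c₁, h₁, hh₁, hm₁⟩ := ih (Function.update D c (D c - 1)) (Rfun k T)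
          (fun u v => χ (g u) (g v)) hsum' le_rfl
        by_cases hc₁ : c₁ = c
        case neg =>
          have hDc₁ : Function.update D c (D c - 1) c₁ = D c₁ := Function.update_of_ne hc₁ _ _
          rw [hDc₁] at hh₁ hm₁
          refine ⟨c₁, fun s => g (h₁ s), ?_, ?_⟩
          · have hcomp : RMap [τ] M (D c₁) (fun s => g (h₁ s)) :=
              RMap.comp hg (rmap_of_subtree hh₁)
            exact subtree_of_rmap (RMap.lift (q := []) (b := τ) hcomp)
          · intro s t hs ht hp
            have hps := hh₁.1 s hs
            have hpt := hh₁.1 t ht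
            exact hm₁ s t hs ht (hg.reflect hps hpt hp)
        case pos =>
          rw [hc₁] at hh₁ hm₁
          rw [hupd] at hh₁ hm₁
          refine ⟨c, nodeFun (branchFun τ (fun s' => g (h₁ s')) (fun s' => (!τ) :: h₀ s')) [],
            ?_, ?_⟩
          · rw [hdc]
            apply subtree_of_rmap
            apply RMap.node
            intro b
            by_cases hb : b = τ
            · rw [hb, branchFun_pos]
              exact RMap.comp hg (rmap_of_subtree hh₁)
            · rw [branchFun_neg _ _ _ hb]
              have hbn : b = !τ := bool_ne_eq_not hb
              rw [hbn]
              constructor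
              · intro s hs
                have h2 := hh₀.1 s hs
                refine ⟨List.cons_prefix_cons.mpr ⟨rfl, List.nil_prefix⟩, ?_⟩
                simp only [List.length_cons, List.nil_append, List.length_nil,
                  List.length_append]
                omega
              · intro s b' hs
                have h2 := hh₀.2 s b' hs
                simp only [List.cons_append]
                exact List.cons_prefix_cons.mpr ⟨rfl, h2⟩
          · intro s t hs ht hp
            rw [hdc] at hs ht
            have hTeq : ∀ (u : List Bool) (b₀ : Bool),
                nodeFun (branchFun τ (fun s' => g (h₁ s')) (fun s' => (!τ) :: h₀ s')) [] (b₀ :: u)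
                = branchFun τ (fun s' => g (h₁ s')) (fun s' => (!τ) :: h₀ s') b₀ u :=
              fun _ _ => rfl
            have h9 : (nodeFun (branchFun τ (fun s' => g (h₁ s'))
                (fun s' => (!τ) :: h₀ s')) [] []) = ([] : List Bool) := rfl
            cases t with
            | nil =>
              exfalso
              rw [h9] at hp
              have := hp.length_le
              simp only [List.length_append, List.length_nil, List.length_cons] at this
              omega
            | cons b' t' =>
              have ht' : t'.length ≤ dc := by
                simp only [List.length_cons] at ht; omega
              cases s with
              | nil =>
                rw [h9] at hp
                rw [hTeq t' b'] at hp
                rw [h9, hTeq t' b']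
                by_cases hb' : b' = τ
                · rw [hb', branchFun_pos]
                  exact hgcol (h₁ t') (hh₁.1 t' ht')
                · exfalso
                  rw [branchFun_neg _ _ _ hb'] at hp
                  have hp' : ([] : List Bool) ++ [τ] <+: (!τ) :: h₀ t' := hp
                  have hτ := (List.cons_prefix_cons.mp hp').1
                  simp at hτ
              | cons b s' =>
                have hs' : s'.length ≤ dc := by
                  simp only [List.length_cons] at hs; omega
                have hhead : ∀ (b₀ : Bool) (u : List Bool), u.length ≤ dc →
                    [b₀] <+: branchFun τ (fun s' => g (h₁ s'))
                      (fun s' => (!τ) :: h₀ s') b₀ u := by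
                  intro b₀ u hu
                  by_cases hb : b₀ = τ
                  · rw [hb, branchFun_pos]
                    exact (hg.1 (h₁ u) (hh₁.1 u hu)).1
                  · rw [branchFun_neg _ _ _ hb]
                    have hbn : b₀ = !τ := bool_ne_eq_not hb
                    rw [hbn]
                    exact List.cons_prefix_cons.mpr ⟨rfl, List.nil_prefix⟩
                rw [hTeq s' b, hTeq t' b'] at hp
                rw [hTeq s' b, hTeq t' b']
                have hbb' : b = b' := by
                  have hsub := (List.prefix_append _ _).trans hp
                  exact snoc_prefix_unique (s := ([] : List Bool))
                    ((hhead b s' hs').trans hsub) (hhead b' t' ht')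
                subst hbb'
                by_cases hb : b = τ
                · rw [hb, branchFun_pos] at hp ⊢
                  exact hm₁ s' t' hs' ht'
                    (hg.reflect (hh₁.1 s' hs') (hh₁.1 t' ht') hp)
                · rw [branchFun_neg _ _ _ hb] at hp ⊢
                  have hp2 : h₀ s' ++ [τ] <+: h₀ t' := by
                    have hx : ((!τ) :: h₀ s') ++ [τ] <+: (!τ) :: h₀ t' := hp
                    simpa only [List.cons_append, List.cons_prefix_cons, true_and] using hx
                  exact hm₀ s' t' hs' ht' hp2

theorem Rfun_succ_le {k : ℕ} (hk : 1 ≤ k) : ∀ j, Rfun k j + 1 ≤ (2 * k) ^ j := by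
  intro j
  induction j with
  | zero => simp [Rfun]
  | succ j ih =>
    have h1 : (1 : ℕ) ≤ (2 * k) ^ j := Nat.one_le_pow _ _ (by omega)
    calc Rfun k (j + 1) + 1 = k * (Rfun k j + 1) + 1 := rfl
      _ ≤ k * ((2 * k) ^ j) + 1 := by
          have := Nat.mul_le_mul_left k ih
          omega
      _ ≤ k * ((2 * k) ^ j) + k * ((2 * k) ^ j) := by
          have h2 : 1 ≤ k * ((2 * k) ^ j) := Nat.one_le_iff_ne_zero.mpr
            (Nat.mul_ne_zero (by omega) (by omega))
          omega
      _ = (2 * k) ^ (j + 1) := by ring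

theorem pow_bound {k d n : ℕ} (hk : 1 ≤ k)
    (hn : (n : ℝ) ≥ 2 ^ ((d : ℝ) * k * Real.logb 2 (2 * k))) :
    (2 * k) ^ (d * k) ≤ n := by
  have hx : (0 : ℝ) < 2 * (k : ℝ) := by positivity
  have h1 : (2 : ℝ) ^ ((d : ℝ) * k * Real.logb 2 (2 * k))
      = (2 * (k : ℝ)) ^ ((d * k : ℕ) : ℝ) := by
    rw [mul_comm ((d : ℝ) * k) (Real.logb 2 (2 * k))]
    rw [Real.rpow_mul (by norm_num : (0 : ℝ) ≤ 2)]
    rw [Real.rpow_logb (by norm_num) (by norm_num) hx]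
    push_cast
    ring_nf
  rw [h1, Real.rpow_natCast] at hn
  exact_mod_cast hn

end RamseyAux

/-- Ramsey theorem for comparable pairs of a fixed type `τ` (`false` = left, `true` = right):
if `n ≥ 2^(d·k·log₂(2k))`, then for every coloring `χ` with `k` colors of the τ-pairs of the
complete binary tree of depth `n` (a τ-pair `{u,v}` with `u` the ancestor is colored `χ u v`;
`v` is a τ-descendant of `u` iff `u ++ [τ] <+: v`), there is a complete subtree of depth `d`
all of whose τ-pairs have the same color. -/
theorem ramsey_comparable_pairs (τ : Bool) (d k n : ℕ) (hk : 1 ≤ k)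
    (hn : (n : ℝ) ≥ 2 ^ ((d : ℝ) * k * Real.logb 2 (2 * k)))
    (χ : List Bool → List Bool → Fin k) :
    ∃ f : List Bool → List Bool, SubtreeMap n d f ∧
      ∃ c : Fin k, ∀ s t : List Bool, s.length ≤ d → t.length ≤ d →
        f s ++ [τ] <+: f t → χ (f s) (f t) = c := by
  have hbound := RamseyAux.pow_bound hk hn
  have hR : RamseyAux.Rfun k (k * d) ≤ n := by
    have h1 := RamseyAux.Rfun_succ_le hk (k * d)
    have h2 : (2 * k) ^ (k * d) = (2 * k) ^ (d * k) := by rw [mul_comm k d]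
    omega
  have hsumD : (∑ _c : Fin k, d) = k * d := by
    rw [Finset.sum_const, Finset.card_univ, Fintype.card_fin, smul_eq_mul]
  obtain ⟨c, h, hsub, hmono⟩ :=
    RamseyAux.mainLemma τ (k * d) (fun _ => d) n χ hsumD hR
  exact ⟨h, hsub, c, hmono⟩
end

section
/- For all m ≥ 1, the number τ(m) of types of m-subsets of a complete binary tree satisfies τ(m) ≤ 2^(3m-2) / √(π(m-1)) (for m ≥ 2), and in particular τ(m) = Σ_{k=0}^{m-1} (m-k)·C(m+k-1,k)·2^k/m ≤ C(2m-1, m-1)·2^(m-1). -/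
open Stirling Real Filter Finset Nat

lemma sqrt_pi_le_stirlingSeq (n : ℕ) : Real.sqrt Real.pi ≤ stirlingSeq (n + 1) :=
  stirlingSeq'_antitone.le_of_tendsto
    (tendsto_stirlingSeq_sqrt_pi.comp (tendsto_add_atTop_nat 1)) n

lemma fact_eq_stirling (n : ℕ) (hn : 1 ≤ n) :
    ((n ! : ℝ)) = stirlingSeq n * (Real.sqrt (2 * n) * ((n : ℝ) / Real.exp 1) ^ n) := by
  have hx : (0:ℝ) < (n:ℝ) := by exact_mod_cast hn
  have h : (0:ℝ) < Real.sqrt (2 * n) * ((n : ℝ) / Real.exp 1) ^ n := by positivity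
  rw [stirlingSeq, div_mul_cancel₀]
  exact h.ne'

lemma central_binom_le_real (n : ℕ) (hn : 1 ≤ n) :
    (Nat.choose (2 * n) n : ℝ) ≤ 4 ^ n / Real.sqrt (Real.pi * n) := by
  have hx : (0:ℝ) < (n:ℝ) := by exact_mod_cast hn
  have hsq : (0:ℝ) < Real.sqrt (Real.pi * n) := Real.sqrt_pos.2 (by positivity)
  rw [le_div_iff₀ hsq]
  have hfacpos : (0:ℝ) < ((n ! : ℕ) : ℝ) ^ 2 := by positivity
  rw [← mul_le_mul_iff_of_pos_right hfacpos]
  have hfac : (Nat.choose (2 * n) n : ℝ) * ((n ! : ℕ) : ℝ) ^ 2 = ((2 * n)! : ℝ) := by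
    have := Nat.choose_mul_factorial_mul_factorial (Nat.le_mul_of_pos_left n (by norm_num : 0 < 2))
    have h2 : 2 * n - n = n := by omega
    rw [h2] at this
    push_cast [← this]
    ring
  calc (Nat.choose (2 * n) n : ℝ) * Real.sqrt (Real.pi * n) * ((n ! : ℕ) : ℝ) ^ 2
      = ((2 * n)! : ℝ) * Real.sqrt (Real.pi * n) := by rw [← hfac]; ring
    _ ≤ 4 ^ n * ((n ! : ℕ) : ℝ) ^ 2 := ?_
    _ = 4 ^ n * ((n ! : ℕ) : ℝ) ^ 2 * 1 := by ring
    _ = 4 ^ n * ((n ! : ℕ) : ℝ) ^ 2 := by ring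
  -- main estimate
  have e1 : ((2 * n)! : ℝ) =
      stirlingSeq (2 * n) * (Real.sqrt (2 * (2 * n : ℕ)) * (((2 * n : ℕ) : ℝ) / Real.exp 1) ^ (2 * n)) :=
    fact_eq_stirling (2 * n) (by omega)
  have e2 : ((n ! : ℕ) : ℝ) = stirlingSeq n * (Real.sqrt (2 * n) * ((n : ℝ) / Real.exp 1) ^ n) :=
    fact_eq_stirling n hn
  set s1 := stirlingSeq n with hs1
  set s2 := stirlingSeq (2 * n) with hs2
  set A : ℝ := ((n : ℝ) / Real.exp 1) ^ n with hA
  have hApos : 0 < A := by positivity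
  have hc2 : ((2 * n : ℕ) : ℝ) = 2 * (n : ℝ) := by push_cast; ring
  have h1 : Real.sqrt (2 * ((2 * n : ℕ) : ℝ)) = 2 * Real.sqrt n := by
    rw [hc2, show (2 : ℝ) * (2 * (n:ℝ)) = 2 ^ 2 * (n:ℝ) by ring,
      Real.sqrt_mul (by positivity), Real.sqrt_sq (by norm_num)]
  have h2 : (((2 * n : ℕ) : ℝ) / Real.exp 1) ^ (2 * n) = 4 ^ n * A ^ 2 := by
    have p1 : (2:ℝ) ^ (2 * n) = 4 ^ n := by rw [pow_mul]; norm_num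
    have p2 : ((n:ℝ) / Real.exp 1) ^ (2 * n) = (((n:ℝ) / Real.exp 1) ^ n) ^ 2 := by
      rw [← pow_mul, Nat.mul_comm]
    rw [hc2, hA, show (2 * (n:ℝ)) / Real.exp 1 = 2 * ((n:ℝ) / Real.exp 1) by ring,
      mul_pow, p1, p2]
  have h3 : Real.sqrt (Real.pi * n) = Real.sqrt Real.pi * Real.sqrt n := by
    rw [Real.sqrt_mul Real.pi_pos.le]
  have hxx : Real.sqrt (n:ℝ) * Real.sqrt (n:ℝ) = (n:ℝ) := Real.mul_self_sqrt hx.le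
  have h4 : Real.sqrt (2 * (n:ℝ)) ^ 2 = 2 * (n:ℝ) := Real.sq_sqrt (by positivity)
  have hs1pi : Real.sqrt Real.pi ≤ s1 := by
    obtain ⟨k, rfl⟩ : ∃ k, n = k + 1 := ⟨n - 1, by omega⟩
    exact sqrt_pi_le_stirlingSeq k
  have hs21 : s2 ≤ s1 := by
    obtain ⟨k, rfl⟩ : ∃ k, n = k + 1 := ⟨n - 1, by omega⟩
    have : 2 * (k + 1) = (2 * k + 1) + 1 := by ring
    rw [hs2, hs1, this]
    exact stirlingSeq'_antitone (by omega : k ≤ 2 * k + 1)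
  have hs2pos : 0 < s2 := by
    obtain ⟨k, hk⟩ : ∃ k, 2 * n = k + 1 := ⟨2 * n - 1, by omega⟩
    rw [hs2, hk]; exact stirlingSeq'_pos k
  have key : s2 * Real.sqrt Real.pi ≤ s1 * s1 :=
    mul_le_mul hs21 hs1pi (Real.sqrt_nonneg _) ((Real.sqrt_nonneg _).trans hs1pi)
  calc ((2 * n)! : ℝ) * Real.sqrt (Real.pi * n)
      = (s2 * Real.sqrt Real.pi) * (2 * (Real.sqrt n * Real.sqrt n) * (4 ^ n * A ^ 2)) := by
        rw [e1, h1, h2, h3]; ring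
    _ ≤ (s1 * s1) * (2 * (Real.sqrt n * Real.sqrt n) * (4 ^ n * A ^ 2)) := by
        apply mul_le_mul_of_nonneg_right key; positivity
    _ = (s1 * s1) * (2 * (n:ℝ) * (4 ^ n * A ^ 2)) := by rw [hxx]
    _ = 4 ^ n * ((n ! : ℕ) : ℝ) ^ 2 := by
        rw [e2, mul_pow, mul_pow, h4]; ring

/-- `tauFormula m = Σ_{k=0}^{m-1} (m-k)·C(m+k-1,k)·2^k`, which equals `m · τ(m)` where `τ(m)`
is the number of types of `m`-subsets of a complete binary tree. -/
def tauFormula (m : ℕ) : ℕ :=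
  ∑ k ∈ Finset.range m, (m - k) * Nat.choose (m + k - 1) k * 2 ^ k

lemma tauFormula_le (m : ℕ) (hm : 1 ≤ m) :
    tauFormula m ≤ m * (Nat.choose (2 * m - 1) (m - 1) * 2 ^ (m - 1)) := by
  have hterm : ∀ k ∈ Finset.range m,
      (m - k) * Nat.choose (m + k - 1) k * 2 ^ k ≤
        Nat.choose (2 * m - 1) (m - 1) * 2 ^ (m - 1) := by
    intro k hk
    rw [Finset.mem_range] at hk
    have hch : Nat.choose (m + k - 1) k ≤ Nat.choose (2 * m - 1) (m - 1) := by
      have hsymm : Nat.choose (m + k - 1) k = Nat.choose (m + k - 1) (m - 1) := by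
        rw [← Nat.choose_symm (by omega : k ≤ m + k - 1)]
        congr 1
        omega
      rw [hsymm]
      exact Nat.choose_le_choose (m - 1) (by omega)
    have hmk : (m - k) * 2 ^ k ≤ 2 ^ (m - 1) := by
      have h1 : m - k ≤ 2 ^ (m - k - 1) := by
        have := Nat.lt_two_pow_self (n := m - k - 1)
        omega
      calc (m - k) * 2 ^ k ≤ 2 ^ (m - k - 1) * 2 ^ k := Nat.mul_le_mul_right _ h1
        _ = 2 ^ (m - k - 1 + k) := (pow_add 2 _ _).symm
        _ = 2 ^ (m - 1) := by congr 1; omega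
    calc (m - k) * Nat.choose (m + k - 1) k * 2 ^ k
        = Nat.choose (m + k - 1) k * ((m - k) * 2 ^ k) := by ring
      _ ≤ Nat.choose (2 * m - 1) (m - 1) * 2 ^ (m - 1) := Nat.mul_le_mul hch hmk
  calc tauFormula m ≤ ∑ _k ∈ Finset.range m, Nat.choose (2 * m - 1) (m - 1) * 2 ^ (m - 1) :=
        Finset.sum_le_sum hterm
    _ = m * (Nat.choose (2 * m - 1) (m - 1) * 2 ^ (m - 1)) := by
        rw [Finset.sum_const, Finset.card_range, smul_eq_mul]

/-- For `m ≥ 1`, `τ(m) = (Σ_{k=0}^{m-1} (m-k)·C(m+k-1,k)·2^k)/m ≤ C(2m-1, m-1)·2^(m-1)`,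
and for `m ≥ 2`, `τ(m) ≤ 2^(3m-2)/√(π(m-1))`. -/
theorem tau_upper_bound (m : ℕ) (hm : 1 ≤ m) :
    tauFormula m ≤ m * (Nat.choose (2 * m - 1) (m - 1) * 2 ^ (m - 1)) ∧
    (2 ≤ m → (tauFormula m : ℝ) / m ≤
      2 ^ (3 * m - 2) / Real.sqrt (Real.pi * (m - 1))) := by
  refine ⟨tauFormula_le m hm, fun hm2 => ?_⟩
  obtain ⟨n, rfl⟩ : ∃ n, m = n + 2 := ⟨m - 2, by omega⟩
  have hch2 : Nat.choose (2 * (n + 2) - 1) (n + 2 - 1) ≤ 2 * Nat.choose (2 * (n + 1)) (n + 1) := by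
    have he : 2 * (n + 2) - 1 = (2 * n + 2) + 1 := by omega
    have he2 : n + 2 - 1 = n + 1 := by omega
    rw [he, he2, Nat.choose_succ_succ']
    have hmid : (2 * n + 2) / 2 = n + 1 := by omega
    have b1 : Nat.choose (2 * n + 2) n ≤ Nat.choose (2 * n + 2) (n + 1) := by
      have := Nat.choose_le_middle n (2 * n + 2)
      rwa [hmid] at this
    have h22 : 2 * (n + 1) = 2 * n + 2 := by ring
    rw [h22]
    omega
  have hcb : (Nat.choose (2 * (n + 1)) (n + 1) : ℝ) ≤
      4 ^ (n + 1) / Real.sqrt (Real.pi * ((n : ℝ) + 1)) := by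
    have := central_binom_le_real (n + 1) (by omega)
    push_cast at this ⊢
    exact this
  have hsq : (0:ℝ) < Real.sqrt (Real.pi * ((n:ℝ) + 1)) := by
    apply Real.sqrt_pos.2; positivity
  have hmp : (0:ℝ) < ((n + 2 : ℕ) : ℝ) := by positivity
  have hBs : (Nat.choose (2 * (n + 1)) (n + 1) : ℝ) * Real.sqrt (Real.pi * ((n:ℝ) + 1))
      ≤ 4 ^ (n + 1) := (le_div_iff₀ hsq).1 hcb
  have hnat := tauFormula_le (n + 2) (by omega)
  rw [show n + 2 - 1 = n + 1 from by omega] at hnat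
  have h1 : (tauFormula (n + 2) : ℝ) ≤
      ((n + 2 : ℕ) : ℝ) * ((Nat.choose (2 * (n + 2) - 1) (n + 1) : ℝ) * 2 ^ (n + 1)) := by
    exact_mod_cast hnat
  have hctx : ((↑(n + 2) : ℝ) - 1) = (n : ℝ) + 1 := by push_cast; ring
  rw [hctx, div_le_div_iff₀ hmp hsq]
  have hC : (Nat.choose (2 * (n + 2) - 1) (n + 1) : ℝ) ≤
      2 * (Nat.choose (2 * (n + 1)) (n + 1) : ℝ) := by exact_mod_cast hch2
  calc (tauFormula (n + 2) : ℝ) * Real.sqrt (Real.pi * ((n:ℝ) + 1))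
      ≤ (((n + 2 : ℕ) : ℝ) * ((Nat.choose (2 * (n + 2) - 1) (n + 1) : ℝ) * 2 ^ (n + 1))) *
          Real.sqrt (Real.pi * ((n:ℝ) + 1)) := by
        exact mul_le_mul_of_nonneg_right h1 hsq.le
    _ ≤ (((n + 2 : ℕ) : ℝ) * ((2 * (Nat.choose (2 * (n + 1)) (n + 1) : ℝ)) * 2 ^ (n + 1))) *
          Real.sqrt (Real.pi * ((n:ℝ) + 1)) := by gcongr
    _ = (((n + 2 : ℕ) : ℝ) * 2 ^ (n + 2)) *
          ((Nat.choose (2 * (n + 1)) (n + 1) : ℝ) * Real.sqrt (Real.pi * ((n:ℝ) + 1))) := by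
        ring
    _ ≤ (((n + 2 : ℕ) : ℝ) * 2 ^ (n + 2)) * 4 ^ (n + 1) := by
        apply mul_le_mul_of_nonneg_left hBs; positivity
    _ = 2 ^ (3 * (n + 2) - 2) * ((n + 2 : ℕ) : ℝ) := by
        rw [show 3 * (n + 2) - 2 = 3 * n + 4 from by omega,
          show (4 : ℝ) = 2 ^ 2 from by norm_num, ← pow_mul]
        ring
end

section
/- Define the coloring of pairs of vertices of the infinite complete binary tree: red for left-pairs, blue for right-pairs, green for incomparable pairs whose left vertex is at depth at least the depth of the right vertex, and yellow for incomparable pairs whose left vertex is at depth strictly smaller than the right vertex. Then every infinite complete subtree contains pairs of all four colors; in particular no infinite trichromatic subtree exists. -/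
/-- Lowest common ancestor of two vertices (bit strings) of the infinite complete binary tree:
their longest common prefix. -/
def lca : List Bool → List Bool → List Bool
  | a :: as, b :: bs => if a = b then a :: lca as bs else []
  | _, _ => []

/-- `f` embeds the infinite complete binary tree as an infinite complete subtree
(preserving left/right descendant relations). -/
def InfSubtreeMap (f : List Bool → List Bool) : Prop :=
  ∀ s : List Bool, ∀ b : Bool, f s ++ [b] <+: f (s ++ [b])

lemma lca_cons_ne (u' v' : List Bool) : lca (false :: u') (true :: v') = [] := by
  simp [lca]

lemma lca_eq_of_prefix {l u v : List Bool} (hu : l ++ [false] <+: u)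
    (hv : l ++ [true] <+: v) : lca u v = l := by
  induction l generalizing u v with
  | nil =>
    obtain ⟨t, ht⟩ := hu; obtain ⟨s, hs⟩ := hv
    subst ht; subst hs
    simp [lca]
  | cons a l ih =>
    obtain ⟨t, ht⟩ := hu; obtain ⟨s, hs⟩ := hv
    subst ht; subst hs
    have h1 : (a :: l ++ [false]) ++ t = a :: ((l ++ [false]) ++ t) := by simp
    have h2 : (a :: l ++ [true]) ++ s = a :: ((l ++ [true]) ++ s) := by simp
    rw [h1, h2]
    simp only [lca, if_pos rfl]
    rw [ih ⟨t, rfl⟩ ⟨s, rfl⟩]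
    simp

lemma grow (f : List Bool → List Bool) (hf : InfSubtreeMap f) (s : List Bool) (b : Bool) :
    ∀ n, (f s ++ [b] <+: f (s ++ b :: List.replicate n b)) ∧
       (f s).length + 1 + n ≤ (f (s ++ b :: List.replicate n b)).length := by
  intro n
  induction n with
  | zero =>
    have h := hf s b
    refine ⟨h, ?_⟩
    have := h.length_le
    simpa using this
  | succ n ih =>
    have hrw : s ++ b :: List.replicate (n + 1) b
        = (s ++ b :: List.replicate n b) ++ [b] := by
      simp [List.replicate_succ']
    rw [hrw]
    have h := hf (s ++ b :: List.replicate n b) b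
    constructor
    · exact ih.1.trans ((List.prefix_append _ [b]).trans h)
    · have := h.length_le
      simp only [List.length_append, List.length_singleton] at this
      omega

/-- Color pairs of vertices of the infinite complete binary tree: red for left-pairs, blue for
right-pairs, green for incomparable pairs whose left vertex (the left descendant of the LCA)
has depth at least the depth of the right vertex, yellow for incomparable pairs whose left
vertex has depth strictly smaller than that of the right vertex (depth = length of the bit
string). Then every infinite complete subtree contains pairs of all four colors; in particular
no infinite trichromatic subtree exists for this coloring. -/
theorem infinite_subtree_four_colors (f : List Bool → List Bool) (hf : InfSubtreeMap f) :
    (∃ u ∈ Set.range f, ∃ v ∈ Set.range f, u ++ [false] <+: v) ∧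
    (∃ u ∈ Set.range f, ∃ v ∈ Set.range f, u ++ [true] <+: v) ∧
    (∃ u ∈ Set.range f, ∃ v ∈ Set.range f,
      lca u v ++ [false] <+: u ∧ lca u v ++ [true] <+: v ∧ v.length ≤ u.length) ∧
    (∃ u ∈ Set.range f, ∃ v ∈ Set.range f,
      lca u v ++ [false] <+: u ∧ lca u v ++ [true] <+: v ∧ u.length < v.length) := by
  have hred := hf [] false
  have hblue := hf [] true
  refine ⟨⟨f [], ⟨[], rfl⟩, f [false], ⟨[false], by simp⟩, by simpa using hred⟩,
    ⟨f [], ⟨[], rfl⟩, f [true], ⟨[true], by simp⟩, by simpa using hblue⟩, ?_, ?_⟩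
  · -- green
    set n := (f [true]).length with hn
    obtain ⟨hu, hlen⟩ := grow f hf [] false n
    refine ⟨f ([] ++ false :: List.replicate n false), ⟨_, rfl⟩, f [true], ⟨[true], rfl⟩, ?_⟩
    have hv : f [] ++ [true] <+: f [true] := by simpa using hblue
    rw [lca_eq_of_prefix hu hv]
    exact ⟨hu, hv, by omega⟩
  · -- yellow
    set n := (f [false]).length with hn
    obtain ⟨hv, hlen⟩ := grow f hf [] true n
    refine ⟨f [false], ⟨[false], rfl⟩, f ([] ++ true :: List.replicate n true), ⟨_, rfl⟩, ?_⟩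
    have hu : f [] ++ [false] <+: f [false] := by simpa using hred
    rw [lca_eq_of_prefix hu hv]
    exact ⟨hu, hv, by omega⟩
end

section
/- Define R(d,m,k) as the minimal n such that for every k-coloring of all m-chains of a complete binary tree of depth n there exists a type-monochromatic subtree of depth d (i.e., any two m-chains of the same type within the subtree have the same color). Then R(d,m,k) satisfies the recursive bound R(d,m,k) ≤ k^(2·R(d,m-1,k²)^(m-1)) for m ≥ 2, k ≥ 2. -/
/-- Two `m`-chains have the same type: corresponding pairs have the same left/right
descendant relations (equivalently, the same tuples of left/right turns). -/
def SameTurns (m : ℕ) (C D : Fin m → List Bool) : Prop :=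
  ∀ i j : Fin m, i < j → ∀ b : Bool, ((C i ++ [b] <+: C j) ↔ (D i ++ [b] <+: D j))

/-- `C` is an `m`-chain (vertices strictly increasing in the descendant/prefix order) all of
whose vertices lie in the subtree given by `f` (of depth `d`). -/
def ChainIn (m d : ℕ) (f : List Bool → List Bool) (C : Fin m → List Bool) : Prop :=
  (∀ i j : Fin m, i < j → C i <+: C j ∧ C i ≠ C j) ∧
  (∀ i : Fin m, ∃ s : List Bool, s.length ≤ d ∧ C i = f s)

/-- `HasRamsey n d m k`: for every coloring with `k` colors of the `m`-chains of the complete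
binary tree of depth `n`, there is a complete subtree of depth `d` that is type-monochromatic
(any two `m`-chains of the same type in the subtree have the same color). -/
def HasRamsey (n d m k : ℕ) : Prop :=
  ∀ χ : (Fin m → List Bool) → Fin k,
    ∃ f : List Bool → List Bool, SubtreeMap n d f ∧
      ∀ C D : Fin m → List Bool, ChainIn m d f C → ChainIn m d f D →
        SameTurns m C D → χ C = χ D

namespace RamseyAux

/-- two prefixes of the same list of equal length are equal -/
lemma prefix_eq_prefix {s t u : List Bool} (h1 : s <+: u) (h2 : t <+: u)
    (hl : s.length = t.length) : s = t := by
  rcases List.prefix_or_prefix_of_prefix h1 h2 with h | h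
  · exact h.eq_of_length hl
  · exact (h.eq_of_length hl.symm).symm

/-- same next-bit lemma -/
lemma bit_eq_bit {s u : List Bool} {b b' : Bool} (h1 : s ++ [b] <+: u)
    (h2 : s ++ [b'] <+: u) : b = b' := by
  have := prefix_eq_prefix h1 h2 (by simp)
  simpa using List.append_inj_right this rfl

/-- existence of next bit for a strict prefix -/
lemma exists_next_bit {s t : List Bool} (h : s <+: t) (hne : s ≠ t) :
    ∃ b, s ++ [b] <+: t := by
  obtain ⟨u, rfl⟩ := h
  cases u with
  | nil => exact absurd (by simp) hne
  | cons b u' => exact ⟨b, ⟨u', by simp⟩⟩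

/-- divergence lemma -/
lemma diverge : ∀ s t : List Bool, s <+: t ∨ t <+: s ∨
    ∃ c b, c ++ [b] <+: s ∧ c ++ [!b] <+: t := by
  intro s
  induction s with
  | nil => intro t; exact Or.inl (List.nil_prefix)
  | cons a s' ih =>
    intro t
    cases t with
    | nil => exact Or.inr (Or.inl (List.nil_prefix))
    | cons a' t' =>
      by_cases haa : a = a'
      · subst haa
        rcases ih t' with h | h | ⟨c, b, h1, h2⟩
        · exact Or.inl (by simp [List.cons_prefix_cons, h])
        · exact Or.inr (Or.inl (by simp [List.cons_prefix_cons, h]))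
        · refine Or.inr (Or.inr ⟨a :: c, b, ?_, ?_⟩)
          · simpa [List.cons_prefix_cons] using h1
          · simpa [List.cons_prefix_cons] using h2
      · refine Or.inr (Or.inr ⟨[], a, ?_, ?_⟩)
        · simp [List.cons_prefix_cons]
        · have : a' = !a := by
            cases a <;> cases a' <;> simp_all
          simp [List.cons_prefix_cons, this]

lemma length_lt_of_strict_prefix {s t : List Bool} (h : s <+: t) (hne : s ≠ t) :
    s.length < t.length := by
  rcases Nat.lt_or_ge s.length t.length with h' | h'
  · exact h'
  · exact absurd (h.eq_of_length (le_antisymm h.length_le h')) hne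

section STM
variable {n h : ℕ} {e : List Bool → List Bool}

lemma stm_mono (he : SubtreeMap n h e) {s t : List Bool} (hst : s <+: t)
    (ht : t.length ≤ h) : e s <+: e t := by
  obtain ⟨u, rfl⟩ := hst
  induction u using List.reverseRecOn with
  | nil => simp
  | append_singleton u' b ih =>
    have hlen : (s ++ u').length ≤ h := by
      simp at ht ⊢; omega
    have h1 : e s <+: e (s ++ u') := ih (by simpa using hlen)
    have h2 : e (s ++ u') ++ [b] <+: e (s ++ u' ++ [b]) := by
      apply he.2
      simp at ht ⊢; omega
    rw [← List.append_assoc]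
    exact h1.trans ((List.prefix_append _ [b]).trans h2)

lemma stm_turn_iff (he : SubtreeMap n h e) {s t : List Bool} {b : Bool}
    (hs : s.length ≤ h) (ht : t.length ≤ h) :
    e s ++ [b] <+: e t ↔ s ++ [b] <+: t := by
  constructor
  · intro hp
    have hset : e s <+: e t := (List.prefix_append _ [b]).trans hp
    have hne : s ≠ t := by
      rintro rfl
      have := hp.length_le; simp at this
    have hst : s <+: t := by
      rcases diverge s t with h1 | h1 | ⟨c, b', h1, h2⟩
      · exact h1
      · exfalso
        have : e t <+: e s := stm_mono he h1 hs
        have h3 := hp.length_le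
        have h4 := this.length_le
        simp at h3; omega
      · exfalso
        have hc1 : c.length < h := by
          have := h1.length_le; simp at this; omega
        have e1 : e c ++ [b'] <+: e s :=
          (he.2 c b' hc1).trans (stm_mono he h1 hs)
        have e2 : e c ++ [!b'] <+: e t :=
          (he.2 c (!b') hc1).trans (stm_mono he h2 ht)
        have e3 : e c ++ [b'] <+: e t := e1.trans hset
        have := bit_eq_bit e3 e2
        simp at this
    obtain ⟨b', hb'⟩ := exists_next_bit hst hne
    have : e s ++ [b'] <+: e t := by
      have h1 : e s ++ [b'] <+: e (s ++ [b']) := he.2 s b' (by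
        have := hb'.length_le; simp at this; omega)
      exact h1.trans (stm_mono he hb' ht)
    rwa [bit_eq_bit hp this]
  · intro hp
    have h1 : e s ++ [b] <+: e (s ++ [b]) := he.2 s b (by
      have := hp.length_le; simp at this; omega)
    exact h1.trans (stm_mono he hp ht)

end STM
section STM2
variable {n h : ℕ} {e : List Bool → List Bool}

lemma stm_restrict (he : SubtreeMap n h e) {d : ℕ} (hd : d ≤ h) :
    SubtreeMap n d e :=
  ⟨fun s hs => he.1 s (hs.trans hd), fun s b hs => he.2 s b (lt_of_lt_of_le hs hd)⟩

lemma stm_comp {d : ℕ} {g : List Bool → List Bool} (he : SubtreeMap n h e)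
    (hg : SubtreeMap h d g) : SubtreeMap n d (fun s => e (g s)) := by
  constructor
  · intro s hs; exact he.1 _ (hg.1 s hs)
  · intro s b hs
    have h1 : g s ++ [b] <+: g (s ++ [b]) := hg.2 s b hs
    have h2 : e (g s) ++ [b] <+: e (g s ++ [b]) := he.2 _ b (by
      have := (hg.1 (s ++ [b]) (by simp; omega)).trans (le_refl _)
      have h3 := h1.length_le
      simp at h3
      omega)
    exact h2.trans (stm_mono he h1 (hg.1 (s ++ [b]) (by simp; omega)))

/-- reflection of strict prefix through an embedding -/
lemma stm_reflect (he : SubtreeMap n h e) {s t : List Bool}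
    (hs : s.length ≤ h) (ht : t.length ≤ h)
    (hp : e s <+: e t) (hne : e s ≠ e t) : s <+: t ∧ s ≠ t := by
  obtain ⟨b, hb⟩ := exists_next_bit hp hne
  have := (stm_turn_iff he hs ht).mp hb
  constructor
  · exact (List.prefix_append _ [b]).trans this
  · rintro rfl
    have := this.length_le; simp at this

end STM2

/-- image of the depth-`h` tree under `e` -/
def Img (e : List Bool → List Bool) (h : ℕ) : Set (List Bool) :=
  {v | ∃ s, s.length ≤ h ∧ v = e s}

/-- The pigeonhole sum lemma: in a cone of depth `t` below `u`, the sum over colors of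
(1 + depth of the best monochromatic subtree) is at least `t+1`. -/
lemma sumlem {κ : Type} [Fintype κ] (c : List Bool → κ) :
    ∀ (t : ℕ) (u : List Bool), ∃ a : κ → ℕ, (t + 1 ≤ ∑ i, a i) ∧
      ∀ i dep, a i = dep + 1 → ∃ g' : List Bool → List Bool,
        (u <+: g' []) ∧ (∀ s, s.length ≤ dep → (g' s).length ≤ u.length + t) ∧
        (∀ s b, s.length < dep → g' s ++ [b] <+: g' (s ++ [b])) ∧
        (∀ s, s.length ≤ dep → c (g' s) = i) := by
  intro t
  induction t with
  | zero =>
    intro u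
    classical
    refine ⟨fun i => if i = c u then 1 else 0, by simp, ?_⟩
    intro i dep hdep
    have hi : i = c u := by by_contra hne; simp [hne] at hdep
    have hdep0 : dep = 0 := by by_contra hne; simp [hi] at hdep; omega
    subst hdep0
    refine ⟨fun _ => u, List.prefix_refl u, by simp, by simp, ?_⟩
    intro s hs
    have : s = [] := List.length_eq_zero_iff.mp (Nat.le_zero.mp hs)
    simp [this, hi]
  | succ t ih =>
    intro u
    classical
    obtain ⟨a0, ha0, hw0⟩ := ih (u ++ [false])
    obtain ⟨a1, ha1, hw1⟩ := ih (u ++ [true])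
    set i₀ := c u with hi₀
    set ab : Bool → κ → ℕ := fun b => bif b then a1 else a0 with hab
    have hsb : ∀ b, (t + 1 ≤ ∑ i, ab b i) ∧
        ∀ i dep, ab b i = dep + 1 → ∃ g' : List Bool → List Bool,
          (u ++ [b] <+: g' []) ∧
          (∀ s, s.length ≤ dep → (g' s).length ≤ u.length + 1 + t) ∧
          (∀ s b', s.length < dep → g' s ++ [b'] <+: g' (s ++ [b'])) ∧
          (∀ s, s.length ≤ dep → c (g' s) = i) := by
      intro b; cases b
      · exact ⟨ha0, fun i dep hd => by
          obtain ⟨g', h1, h2, h3, h4⟩ := hw0 i dep hd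
          exact ⟨g', h1, fun s hs => by have := h2 s hs; simpa using this, h3, h4⟩⟩
      · exact ⟨ha1, fun i dep hd => by
          obtain ⟨g', h1, h2, h3, h4⟩ := hw1 i dep hd
          exact ⟨g', h1, fun s hs => by have := h2 s hs; simpa using this, h3, h4⟩⟩
    obtain ⟨bs, hbs⟩ : ∃ bs : Bool, ∀ b, ab bs i₀ ≤ ab b i₀ := by
      rcases le_total (a0 i₀) (a1 i₀) with hmin | hmin
      · exact ⟨false, fun b => by cases b <;> simpa [hab]⟩
      · exact ⟨true, fun b => by cases b <;> simpa [hab]⟩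
    refine ⟨fun i => if i = i₀ then ab bs i₀ + 1 else ab bs i, ?_, ?_⟩
    · have : ∀ i, (if i = i₀ then ab bs i₀ + 1 else ab bs i)
          = ab bs i + (if i = i₀ then 1 else 0) := by
        intro i; by_cases hi : i = i₀ <;> simp [hi]
      rw [Finset.sum_congr rfl (fun i _ => this i), Finset.sum_add_distrib]
      have h2 : ∑ i, (if i = i₀ then 1 else 0 : ℕ) = 1 := by simp
      have := (hsb bs).1
      omega
    · intro i dep hdep
      by_cases hi : i = i₀
      · subst hi
        have hdepv : dep = ab bs i₀ := by simp at hdep; omega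
        cases dep with
        | zero =>
          refine ⟨fun _ => u, List.prefix_refl u, by simp, by simp, ?_⟩
          intro s hs
          have : s = [] := List.length_eq_zero_iff.mp (Nat.le_zero.mp hs)
          simp [this, hi₀]
        | succ d' =>
          have hpos : ∀ b, ∃ db, ab b i₀ = db + 1 ∧ d' ≤ db := by
            intro b
            have h1 := hbs b
            refine ⟨ab b i₀ - 1, by omega, by omega⟩
          obtain ⟨d0, hd0, hd0'⟩ := hpos false
          obtain ⟨d1, hd1, hd1'⟩ := hpos true
          obtain ⟨gf, hgf1, hgf2, hgf3, hgf4⟩ := (hsb false).2 i₀ d0 hd0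
          obtain ⟨gt, hgt1, hgt2, hgt3, hgt4⟩ := (hsb true).2 i₀ d1 hd1
          set gb : Bool → List Bool → List Bool := fun bb => bif bb then gt else gf
            with hgb
          have hgbp : ∀ bb, (u ++ [bb] <+: gb bb []) ∧
              (∀ s, s.length ≤ d' → (gb bb s).length ≤ u.length + 1 + t) ∧
              (∀ s b', s.length < d' → gb bb s ++ [b'] <+: gb bb (s ++ [b'])) ∧
              (∀ s, s.length ≤ d' → c (gb bb s) = i₀) := by
            intro bb; cases bb
            · exact ⟨hgf1, fun s hs => hgf2 s (hs.trans hd0'),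
                fun s b' hs => hgf3 s b' (lt_of_lt_of_le hs hd0'),
                fun s hs => hgf4 s (hs.trans hd0')⟩
            · exact ⟨hgt1, fun s hs => hgt2 s (hs.trans hd1'),
                fun s b' hs => hgt3 s b' (lt_of_lt_of_le hs hd1'),
                fun s hs => hgt4 s (hs.trans hd1')⟩
          refine ⟨fun s => match s with | [] => u | bb :: s' => gb bb s',
            List.prefix_refl u, ?_, ?_, ?_⟩
          · intro s hs
            cases s with
            | nil => show u.length ≤ u.length + (t + 1); omega
            | cons bb s' =>
              have h5 : s'.length ≤ d' := by simp at hs; omega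
              have h6 := (hgbp bb).2.1 s' h5
              show (gb bb s').length ≤ u.length + (t + 1)
              omega
          · intro s b' hs
            cases s with
            | nil =>
              show u ++ [b'] <+: gb b' []
              exact (hgbp b').1
            | cons bb s' =>
              have h5 : s'.length < d' := by simp at hs; omega
              show gb bb s' ++ [b'] <+: gb bb (s' ++ [b'])
              exact (hgbp bb).2.2.1 s' b' h5
          · intro s hs
            cases s with
            | nil => show c u = i₀; exact hi₀.symm
            | cons bb s' =>
              have h5 : s'.length ≤ d' := by simp at hs; omega
              exact (hgbp bb).2.2.2 s' h5
      · simp only [if_neg hi] at hdep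
        obtain ⟨g', h1, h2, h3, h4⟩ := (hsb bs).2 i dep hdep
        exact ⟨g', (List.prefix_append u [bs]).trans h1,
          fun s hs => by have := h2 s hs; omega, h3, h4⟩
/-- Refinement: any coloring of the depth-`t` tree admits a monochromatic subtree of
depth `dep` with `card κ * (dep+1) ≥ t+1`. -/
lemma refineTree {κ : Type} [Fintype κ] (c : List Bool → κ) (t : ℕ) :
    ∃ (i : κ) (dep : ℕ) (g' : List Bool → List Bool),
      t + 1 ≤ Fintype.card κ * (dep + 1) ∧ SubtreeMap t dep g' ∧
      ∀ s, s.length ≤ dep → c (g' s) = i := by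
  classical
  obtain ⟨a, ha, hw⟩ := sumlem c t []
  have hne : Nonempty κ := ⟨c []⟩
  obtain ⟨i, -, hi⟩ := Finset.exists_max_image Finset.univ a ⟨c [], Finset.mem_univ _⟩
  have hcard : t + 1 ≤ Fintype.card κ * a i := by
    calc t + 1 ≤ ∑ j, a j := ha
    _ ≤ ∑ _j : κ, a i := Finset.sum_le_sum (fun j _ => hi j (Finset.mem_univ j))
    _ = Fintype.card κ * a i := by rw [Finset.sum_const, Finset.card_univ, smul_eq_mul]
  have hpos : 1 ≤ a i := by
    by_contra h
    have : a i = 0 := by omega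
    rw [this, mul_zero] at hcard; omega
  obtain ⟨g', h1, h2, h3, h4⟩ := hw i (a i - 1) (by omega)
  have hfix : a i - 1 + 1 = a i := by omega
  refine ⟨i, a i - 1, g', ?_, ⟨fun s hs => ?_, h3⟩, h4⟩
  · rw [hfix]; exact hcard
  · have := h2 s hs; simpa using this

/-- cost function for the end-homogenization construction -/
def Fcost (k M : ℕ) : ℕ → ℕ → ℕ
  | _, 0 => 0
  | l, D + 1 => k ^ (l ^ M) * (Fcost k M (l + 1) D + 1)

lemma fcost_le (k M : ℕ) (hk : 1 ≤ k) :
    ∀ D l, Fcost k M l D ≤ (2 * k ^ ((l + D) ^ M)) ^ D := by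
  intro D
  induction D with
  | zero => intro l; simp [Fcost]
  | succ D ih =>
    intro l
    have h1 : Fcost k M l (D + 1) = k ^ (l ^ M) * (Fcost k M (l + 1) D + 1) := rfl
    set Y := k ^ ((l + (D + 1)) ^ M) with hY
    have hY1 : 1 ≤ Y := Nat.one_le_pow _ _ (by omega)
    have h2 : Fcost k M (l + 1) D ≤ (2 * Y) ^ D := by
      have := ih (l + 1)
      have heq : l + 1 + D = l + (D + 1) := by omega
      rwa [heq] at this
    have h3 : k ^ (l ^ M) ≤ Y := by
      apply Nat.pow_le_pow_right (by omega)
      apply Nat.pow_le_pow_left; omega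
    calc Fcost k M l (D + 1) = k ^ (l ^ M) * (Fcost k M (l + 1) D + 1) := h1
      _ ≤ Y * ((2 * Y) ^ D + 1) := by
          apply Nat.mul_le_mul h3; omega
      _ ≤ Y * (2 * (2 * Y) ^ D) := by
          apply Nat.mul_le_mul_left
          have : 1 ≤ (2 * Y) ^ D := Nat.one_le_pow _ _ (by omega)
          omega
      _ = (2 * Y) * (2 * Y) ^ D := by ring
      _ = (2 * Y) ^ (D + 1) := by rw [pow_succ]; ring

lemma fcost_main (k M r : ℕ) (hk : 2 ≤ k) :
    Fcost k M 0 r ≤ k ^ (2 * r ^ (M + 1)) := by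
  cases r with
  | zero => simp [Fcost]
  | succ r' =>
    set r := r' + 1
    have h1 : Fcost k M 0 r ≤ (2 * k ^ ((0 + r) ^ M)) ^ r := fcost_le k M (by omega) r 0
    have h2 : (2 * k ^ (r ^ M)) ^ r ≤ (k ^ (1 + r ^ M)) ^ r := by
      apply Nat.pow_le_pow_left
      rw [pow_add, pow_one]
      exact Nat.mul_le_mul hk (le_refl _)
    have h3 : (k ^ (1 + r ^ M)) ^ r = k ^ ((1 + r ^ M) * r) := by rw [← pow_mul]
    have h4 : (1 + r ^ M) * r ≤ 2 * r ^ (M + 1) := by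
      have hr1 : 1 ≤ r ^ M := Nat.one_le_pow _ _ (by omega)
      have ha : 1 + r ^ M ≤ 2 * r ^ M := by omega
      calc (1 + r ^ M) * r ≤ (2 * r ^ M) * r := Nat.mul_le_mul_right _ ha
        _ = 2 * (r ^ M * r) := by ring
        _ = 2 * r ^ (M + 1) := by rw [pow_succ]
    calc Fcost k M 0 r ≤ (2 * k ^ ((0 + r) ^ M)) ^ r := h1
      _ = (2 * k ^ (r ^ M)) ^ r := by rw [Nat.zero_add]
      _ ≤ (k ^ (1 + r ^ M)) ^ r := h2
      _ = k ^ ((1 + r ^ M) * r) := h3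
      _ ≤ k ^ (2 * r ^ (M + 1)) := Nat.pow_le_pow_right (by omega) h4

/-- End-homogeneity: for every `(M+1)`-chain with elements in `S`, the color of its
extension by a last vertex `w ∈ W` (in direction `b`) does not depend on `w`. -/
def EHom (M k : ℕ) (χ : (Fin (M+2) → List Bool) → Fin k)
    (S W : Set (List Bool)) : Prop :=
  ∀ C : Fin (M+1) → List Bool,
    (∀ i j : Fin (M+1), i < j → C i <+: C j ∧ C i ≠ C j) →
    (∀ i, C i ∈ S) →
    ∀ (b : Bool) (w w' : List Bool), w ∈ W → w' ∈ W →
      C (Fin.last M) ++ [b] <+: w → C (Fin.last M) ++ [b] <+: w' →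
      χ (Fin.snoc C w) = χ (Fin.snoc C w')

lemma build (M k N : ℕ) (χ : (Fin (M+2) → List Bool) → Fin k) (hk : 1 ≤ k) :
    ∀ (D : ℕ) (A : List (List Bool)) (H : ℕ) (e : List Bool → List Bool),
      SubtreeMap N H e →
      (∀ v ∈ A, v <+: e [] ∧ v ≠ e []) →
      EHom M k χ {v | v ∈ A} (Img e H) →
      Fcost k M A.length D ≤ H →
      ∃ g, SubtreeMap N D g ∧ g [] = e [] ∧ (∀ v ∈ Img g D, v ∈ Img e H) ∧
        EHom M k χ ({v | v ∈ A} ∪ Img g D) (Img g D) := by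
  intro D
  induction D with
  | zero =>
    intro A H e he _hA _hHom _hF
    refine ⟨fun _ => e [], ⟨fun s _ => he.1 [] (by simp), fun s b hs => absurd hs (by omega)⟩,
      rfl, ?_, ?_⟩
    · rintro v ⟨s, _, rfl⟩; exact ⟨[], by simp, rfl⟩
    · intro C _hc _hm b w w' hw hw' _ _
      obtain ⟨s, _, rfl⟩ := hw
      obtain ⟨s', _, rfl⟩ := hw'
      rfl
  | succ D ih =>
    intro A H e he hA hHom hF
    classical
    set l := A.length with hl
    set w₀ := e [] with hw₀
    have hfc : Fcost k M l (D + 1) = k ^ (l ^ M) * (Fcost k M (l + 1) D + 1) := rfl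
    have hKpos : 1 ≤ k ^ (l ^ M) := Nat.one_le_pow _ _ (by omega)
    have hH1 : 1 ≤ H := by
      have h2 : k ^ (l ^ M) ≤ Fcost k M l (D + 1) := by
        rw [hfc]; exact Nat.le_mul_of_pos_right _ (by omega)
      omega
    have hbranch : ∀ b : Bool, ∃ gb : List Bool → List Bool,
        SubtreeMap N D gb ∧ (w₀ ++ [b] <+: gb []) ∧
        (∀ v ∈ Img gb D, v ∈ Img e H ∧ w₀ ++ [b] <+: v) ∧
        EHom M k χ ({v | v ∈ A ++ [w₀]} ∪ Img gb D) (Img gb D) := by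
      intro b
      set eb : List Bool → List Bool := fun s => e (b :: s) with heb
      have hstmb : SubtreeMap N (H - 1) eb := by
        constructor
        · intro s hs; exact he.1 (b :: s) (by simp; omega)
        · intro s bb hs
          have h2 := he.2 (b :: s) bb (by simp; omega)
          simpa using h2
      set dec : (Fin M → Fin A.length) → Fin (M+1) → List Bool :=
        fun tc => Fin.snoc (fun i => A.get (tc i)) w₀ with hdec
      set cb : List Bool → ((Fin M → Fin A.length) → Fin k) :=
        fun v tc => χ (Fin.snoc (dec tc) v) with hcb
      obtain ⟨ib, dep, g', hcard, hg', hmono⟩ := refineTree (fun v => cb (eb v)) (H - 1)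
      have hcardeq : Fintype.card ((Fin M → Fin A.length) → Fin k) = k ^ (l ^ M) := by
        rw [Fintype.card_fun, Fintype.card_fun, Fintype.card_fin, Fintype.card_fin,
          Fintype.card_fin]
      have hdep : Fcost k M (l + 1) D ≤ dep := by
        rw [hcardeq] at hcard
        have h3 : k ^ (l ^ M) * (Fcost k M (l+1) D + 1) ≤ k ^ (l ^ M) * (dep + 1) := by
          calc k ^ (l ^ M) * (Fcost k M (l+1) D + 1) = Fcost k M l (D+1) := hfc.symm
            _ ≤ H := hF
            _ = (H - 1) + 1 := by omega
            _ ≤ _ := hcard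
        have := Nat.le_of_mul_le_mul_left h3 (by omega)
        omega
      set eb' : List Bool → List Bool := fun s => eb (g' s) with heb'
      have hstmeb' : SubtreeMap N (Fcost k M (l+1) D) eb' :=
        stm_restrict (stm_comp hstmb hg') hdep
      have hrootp : w₀ ++ [b] <+: eb' [] := by
        have h1 : e [] ++ [b] <+: e [b] := he.2 [] b (by simp; omega)
        have h2 : e [b] <+: e (b :: g' []) := by
          have h3 : [b] <+: b :: g' [] := ⟨g' [], rfl⟩
          have h4 := hg'.1 [] (by simp)
          exact stm_mono he h3 (by simp; omega)
        exact h1.trans h2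
      have hsubimg : ∀ v ∈ Img eb' (Fcost k M (l+1) D), v ∈ Img e H := by
        rintro v ⟨s, hs, rfl⟩
        have h4 := hg'.1 s (le_trans hs hdep)
        exact ⟨b :: g' s, by simp; omega, rfl⟩
      have hrootlen : w₀.length < (eb' []).length := by
        have := hrootp.length_le; simp at this; omega
      have hA' : ∀ v ∈ A ++ [w₀], v <+: eb' [] ∧ v ≠ eb' [] := by
        intro v hv
        rcases List.mem_append.mp hv with hva | hvw
        · obtain ⟨h1, h2⟩ := hA v hva
          have h4 := length_lt_of_strict_prefix h1 h2
          refine ⟨h1.trans ((List.prefix_append w₀ [b]).trans hrootp), ?_⟩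
          intro hEq; rw [hEq] at h4; omega
        · have hvw₀ : v = w₀ := by simpa using hvw
          subst hvw₀
          refine ⟨(List.prefix_append w₀ [b]).trans hrootp, ?_⟩
          intro hEq; rw [← hEq] at hrootlen; omega
      have hHom' : EHom M k χ {v | v ∈ A ++ [w₀]} (Img eb' (Fcost k M (l+1) D)) := by
        intro C hchain hmem bh w w' hw hw' hpw hpw'
        by_cases hall : ∀ i, C i ∈ A
        · exact hHom C hchain (fun i => hall i) bh w w'
            (hsubimg w hw) (hsubimg w' hw') hpw hpw'
        · push_neg at hall
          obtain ⟨i0, hi0⟩ := hall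
          have hi0w : C i0 = w₀ := by
            have := hmem i0; simp at this; tauto
          have hlast : C (Fin.last M) = w₀ := by
            by_cases hi0l : i0 = Fin.last M
            · rw [← hi0l]; exact hi0w
            · exfalso
              have hlt : i0 < Fin.last M := lt_of_le_of_ne (Fin.le_last i0) hi0l
              obtain ⟨hp, hne⟩ := hchain i0 (Fin.last M) hlt
              rw [hi0w] at hp hne
              have hlenw : w₀.length < (C (Fin.last M)).length :=
                length_lt_of_strict_prefix hp hne
              have hm2 := hmem (Fin.last M); simp at hm2
              rcases hm2 with hA2 | hW2
              · have := length_lt_of_strict_prefix (hA _ hA2).1 (hA _ hA2).2; omega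
              · rw [hW2] at hlenw; omega
          have hother : ∀ j : Fin M, C j.castSucc ∈ A := by
            intro j
            have hlt : (j.castSucc : Fin (M+1)) < Fin.last M := Fin.castSucc_lt_last j
            obtain ⟨hp, hne⟩ := hchain _ _ hlt
            have hm2 := hmem j.castSucc; simp at hm2
            rcases hm2 with h | h
            · exact h
            · exfalso; rw [hlast] at hp hne
              have h5 := length_lt_of_strict_prefix hp hne
              rw [h] at h5; omega
          set tc : Fin M → Fin A.length :=
            fun j => (List.mem_iff_get.mp (hother j)).choose with htc
          have hdecC : dec tc = C := by
            funext i
            refine Fin.lastCases ?_ ?_ i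
            · rw [hlast]; simp [hdec]
            · intro j
              simp [hdec, htc]
              exact (List.mem_iff_get.mp (hother j)).choose_spec
          have key : ∀ v ∈ Img eb' (Fcost k M (l+1) D), χ (Fin.snoc C v) = ib tc := by
            rintro v ⟨s, hs, rfl⟩
            have h6 := hmono s (le_trans hs hdep)
            have h7 : cb (eb' s) tc = ib tc := congrFun h6 tc
            rw [hcb] at h7
            simp only [] at h7
            rw [hdecC] at h7
            exact h7
          rw [key w hw, key w' hw']
      obtain ⟨gb, hstm_gb, hgb_root, hgb_sub, hEH_b⟩ :=
        ih (A ++ [w₀]) (Fcost k M (l+1) D) eb' hstmeb' hA' hHom'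
          (by rw [List.length_append]; simp [hl])
      refine ⟨gb, hstm_gb, by rw [hgb_root]; exact hrootp, ?_, hEH_b⟩
      intro v hv
      refine ⟨hsubimg v (hgb_sub v hv), ?_⟩
      obtain ⟨s, hs, rfl⟩ := hv
      have h8 : gb [] <+: gb s := stm_mono hstm_gb List.nil_prefix hs
      rw [hgb_root] at h8
      exact hrootp.trans h8
    obtain ⟨g0, hst0, hr0, hs0, hE0⟩ := hbranch false
    obtain ⟨g1, hst1, hr1, hs1, hE1⟩ := hbranch true
    set gc : Bool → List Bool → List Bool := fun bb => bif bb then g1 else g0 with hgc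
    have hgcp : ∀ bb : Bool, SubtreeMap N D (gc bb) ∧ (w₀ ++ [bb] <+: gc bb []) ∧
        (∀ v ∈ Img (gc bb) D, v ∈ Img e H ∧ w₀ ++ [bb] <+: v) ∧
        EHom M k χ ({v | v ∈ A ++ [w₀]} ∪ Img (gc bb) D) (Img (gc bb) D) := by
      intro bb; cases bb
      · exact ⟨hst0, hr0, hs0, hE0⟩
      · exact ⟨hst1, hr1, hs1, hE1⟩
    set g : List Bool → List Bool := fun s => match s with
      | [] => w₀ | bb :: s' => gc bb s' with hg
    have himgsplit : ∀ v ∈ Img g (D+1), v = w₀ ∨ ∃ bb, v ∈ Img (gc bb) D := by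
      rintro v ⟨s, hs, rfl⟩
      cases s with
      | nil => exact Or.inl rfl
      | cons bb s' => exact Or.inr ⟨bb, ⟨s', by simp at hs; omega, rfl⟩⟩
    have himgE : ∀ v ∈ Img g (D+1), v ∈ Img e H := by
      intro v hv
      rcases himgsplit v hv with heq | ⟨bb, hb⟩
      · exact ⟨[], by simp, heq⟩
      · exact ((hgcp bb).2.2.1 v hb).1
    have hlenA : ∀ v ∈ A, v.length < w₀.length := fun v hv =>
      length_lt_of_strict_prefix (hA v hv).1 (hA v hv).2
    have hlenC : ∀ bb, ∀ v ∈ Img (gc bb) D, w₀.length < v.length := by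
      intro bb v hv
      have := ((hgcp bb).2.2.1 v hv).2.length_le
      simp at this; omega
    refine ⟨g, ?_, rfl, himgE, ?_⟩
    · constructor
      · intro s hs
        cases s with
        | nil => exact he.1 [] (by simp)
        | cons bb s' => exact (hgcp bb).1.1 s' (by simp at hs; omega)
      · intro s b hs
        cases s with
        | nil =>
          show w₀ ++ [b] <+: gc b []
          exact (hgcp b).2.1
        | cons bb s' =>
          show gc bb s' ++ [b] <+: gc bb (s' ++ [b])
          exact (hgcp bb).1.2 s' b (by simp at hs; omega)
    · intro C hchain hmem bh w w' hw hw' hpw hpw'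
      have hmem' : ∀ i, C i ∈ A ∨ C i = w₀ ∨ ∃ bb, C i ∈ Img (gc bb) D := by
        intro i
        rcases hmem i with h | h
        · exact Or.inl h
        · rcases himgsplit _ h with h' | h'
          · exact Or.inr (Or.inl h')
          · exact Or.inr (Or.inr h')
      rcases hmem' (Fin.last M) with hcl | hcl | ⟨bc, hcl⟩
      · -- case (i): C last ∈ A, so the whole chain is in A
        have hallA : ∀ i, C i ∈ A := by
          intro i
          by_cases hil : i = Fin.last M
          · rw [hil]; exact hcl
          · have hlt := lt_of_le_of_ne (Fin.le_last i) hil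
            obtain ⟨hp, hne⟩ := hchain i _ hlt
            have h4 := length_lt_of_strict_prefix hp hne
            have h5 := hlenA _ hcl
            rcases hmem' i with h | h | ⟨bb, h⟩
            · exact h
            · exfalso; rw [h] at h4; omega
            · exfalso; have := hlenC bb _ h; omega
        exact hHom C hchain hallA bh w w' (himgE w hw) (himgE w' hw') hpw hpw'
      · -- case (ii): C last = w₀
        have hwmem : ∀ u, u ∈ Img g (D+1) → C (Fin.last M) ++ [bh] <+: u →
            u ∈ Img (gc bh) D := by
          intro u hu hpu
          rw [hcl] at hpu
          rcases himgsplit u hu with heq | ⟨bb, hb⟩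
          · exfalso; rw [heq] at hpu
            have := hpu.length_le; simp at this
          · have h2 := ((hgcp bb).2.2.1 u hb).2
            have h3 := bit_eq_bit h2 hpu
            rwa [h3] at hb
        have hw2 := hwmem w hw hpw
        have hw2' := hwmem w' hw' hpw'
        have hmemb : ∀ i, C i ∈ ({v | v ∈ A ++ [w₀]} ∪ Img (gc bh) D : Set _) := by
          intro i
          by_cases hil : i = Fin.last M
          · left; rw [hil, hcl]; simp
          · have hlt := lt_of_le_of_ne (Fin.le_last i) hil
            obtain ⟨hp, hne⟩ := hchain i _ hlt
            rw [hcl] at hp hne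
            have h4 := length_lt_of_strict_prefix hp hne
            rcases hmem' i with h | h | ⟨bb, h⟩
            · left; simp [h]
            · exfalso; rw [h] at h4; omega
            · exfalso; have := hlenC bb _ h; omega
        exact (hgcp bh).2.2.2 C hchain hmemb bh w w' hw2 hw2' hpw hpw'
      · -- case (iii): C last in child bc
        have hpc : w₀ ++ [bc] <+: C (Fin.last M) := ((hgcp bc).2.2.1 _ hcl).2
        have hwmem : ∀ u, u ∈ Img g (D+1) → C (Fin.last M) ++ [bh] <+: u →
            u ∈ Img (gc bc) D := by
          intro u hu hpu
          have hpcu : w₀ ++ [bc] <+: u :=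
            hpc.trans ((List.prefix_append _ [bh]).trans hpu)
          rcases himgsplit u hu with heq | ⟨bb, hb⟩
          · exfalso; rw [heq] at hpcu
            have := hpcu.length_le; simp at this
          · have h2 := ((hgcp bb).2.2.1 u hb).2
            have h3 := bit_eq_bit h2 hpcu
            rwa [h3] at hb
        have hw2 := hwmem w hw hpw
        have hw2' := hwmem w' hw' hpw'
        have hmemb : ∀ i, C i ∈ ({v | v ∈ A ++ [w₀]} ∪ Img (gc bc) D : Set _) := by
          intro i
          by_cases hil : i = Fin.last M
          · right; rw [hil]; exact hcl
          · have hlt := lt_of_le_of_ne (Fin.le_last i) hil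
            obtain ⟨hp, hne⟩ := hchain i _ hlt
            rcases hmem' i with h | h | ⟨bb, h⟩
            · left; simp [h]
            · left; simp [h]
            · right
              have h2 := ((hgcp bb).2.2.1 _ h).2
              have h4 : w₀ ++ [bb] <+: C (Fin.last M) := h2.trans hp
              have h5 := bit_eq_bit h4 hpc
              rwa [h5] at h
        exact (hgcp bc).2.2.2 C hchain hmemb bh w w' hw2 hw2' hpw hpw'

lemma step (M k d r : ℕ) (hk : 2 ≤ k) (hram : HasRamsey r d (M+1) (k^2)) :
    HasRamsey (k ^ (2 * r ^ (M+1))) d (M+2) k := by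
  intro χ
  set N := k ^ (2 * r ^ (M+1)) with hN
  have hid : SubtreeMap N N (fun s => s) :=
    ⟨fun s hs => hs, fun s b _ => List.prefix_refl _⟩
  have hHom0 : EHom M k χ {v | v ∈ ([] : List (List Bool))} (Img (fun s => s) N) := by
    intro C _ hmem _ _ _ _ _ _ _
    exact absurd (hmem 0) (by simp)
  obtain ⟨g, hstg, -, -, hEH⟩ := build M k N χ (by omega) r [] N (fun s => s) hid
    (by simp) hHom0 (by simpa using fcost_main k M r hk)
  -- pair encoding into Fin (k^2)
  have hk2 : k ^ 2 = k * k := pow_two k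
  set enc : Fin k → Fin k → Fin (k ^ 2) :=
    fun x y => Fin.cast hk2.symm (finProdFinEquiv (x, y)) with henc
  have henc_inj : ∀ x y x' y', enc x y = enc x' y' → x = x' ∧ y = y' := by
    intro x y x' y' h
    have hval : ((finProdFinEquiv (x, y) : Fin (k * k)) : ℕ)
        = ((finProdFinEquiv (x', y') : Fin (k * k)) : ℕ) := by
      have := congrArg Fin.val h
      simpa [henc] using this
    have h2 : (finProdFinEquiv (x, y) : Fin (k * k)) = finProdFinEquiv (x', y') :=
      Fin.ext hval
    have h3 := finProdFinEquiv.injective h2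
    exact ⟨congrArg Prod.fst h3, congrArg Prod.snd h3⟩
  set χ' : (Fin (M+1) → List Bool) → Fin (k ^ 2) := fun P =>
    enc (χ (Fin.snoc (fun i => g (P i)) (g (P (Fin.last M) ++ [false]))))
        (χ (Fin.snoc (fun i => g (P i)) (g (P (Fin.last M) ++ [true])))) with hχ'
  obtain ⟨f', hstf', hmonof'⟩ := hram χ'
  refine ⟨fun s => g (f' s), stm_comp hstg hstf', ?_⟩
  intro C Dch hCin hDin hsame
  obtain ⟨hCchain, hCw⟩ := hCin
  obtain ⟨hDchain, hDw⟩ := hDin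
  choose sC hsC hCeq using hCw
  choose sD hsD hDeq using hDw
  set P : Fin (M+1) → List Bool := fun i => f' (sC i.castSucc) with hP
  set Q : Fin (M+1) → List Bool := fun i => f' (sD i.castSucc) with hQ
  have hPlen : ∀ i, (P i).length ≤ r := fun i => hstf'.1 _ (hsC _)
  have hQlen : ∀ i, (Q i).length ≤ r := fun i => hstf'.1 _ (hsD _)
  have hCg : ∀ i : Fin (M+1), C i.castSucc = g (P i) := fun i => hCeq i.castSucc
  have hDg : ∀ i : Fin (M+1), Dch i.castSucc = g (Q i) := fun i => hDeq i.castSucc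
  have hlastlt : (Fin.last M).castSucc < Fin.last (M+1) := by
    simp [Fin.lt_def]
  -- the final bit of the chain C (and D)
  obtain ⟨hpCl, hneCl⟩ := hCchain _ _ hlastlt
  obtain ⟨b, hb⟩ := exists_next_bit hpCl hneCl
  obtain ⟨hpDl, hneDl⟩ := hDchain _ _ hlastlt
  have hbD : Dch (Fin.last M).castSucc ++ [b] <+: Dch (Fin.last (M+1)) :=
    (hsame _ _ hlastlt b).mp hb
  -- generic part, for a chain X with decomposition via f'
  have main : ∀ (X : Fin (M+2) → List Bool) (sX : Fin (M+2) → List Bool),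
      (∀ i j, i < j → X i <+: X j ∧ X i ≠ X j) →
      (∀ i, (sX i).length ≤ d) → (∀ i, X i = g (f' (sX i))) →
      X (Fin.last M).castSucc ++ [b] <+: X (Fin.last (M+1)) →
      χ X = χ (Fin.snoc (fun i : Fin (M+1) => g (f' (sX i.castSucc)))
        (g (f' (sX (Fin.last M).castSucc) ++ [b]))) := by
    intro X sX hXchain hsX hXeq hbX
    set PX : Fin (M+1) → List Bool := fun i => f' (sX i.castSucc) with hPX
    have hPXlen : ∀ i, (PX i).length ≤ r := fun i => hstf'.1 _ (hsX _)
    have hXg : ∀ i : Fin (M+1), X i.castSucc = g (PX i) := fun i => hXeq i.castSucc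
    have hfull : (f' (sX (Fin.last (M+1)))).length ≤ r := hstf'.1 _ (hsX _)
    obtain ⟨hpl, hnel⟩ := hXchain _ _ hlastlt
    have hrefl : PX (Fin.last M) <+: f' (sX (Fin.last (M+1))) ∧
        PX (Fin.last M) ≠ f' (sX (Fin.last (M+1))) := by
      apply stm_reflect hstg (hPXlen _) hfull
      · rw [← hXg (Fin.last M), ← hXeq (Fin.last (M+1))]; exact hpl
      · rw [← hXg (Fin.last M), ← hXeq (Fin.last (M+1))]; exact hnel
    have hPXllen : (PX (Fin.last M)).length < r := by
      have h5 := length_lt_of_strict_prefix hrefl.1 hrefl.2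
      omega
    have hXsnoc : X = Fin.snoc (fun i : Fin (M+1) => g (PX i)) (X (Fin.last (M+1))) := by
      funext j
      refine Fin.lastCases ?_ ?_ j
      · simp
      · intro i
        rw [Fin.snoc_castSucc]
        exact hXg i
    have happ := hEH (fun i => g (PX i))
      (by
        intro i j hij
        have hij2 : i.castSucc < j.castSucc := Fin.castSucc_lt_castSucc_iff.mpr hij
        obtain ⟨hp, hne⟩ := hXchain _ _ hij2
        rw [hXg i, hXg j] at hp hne
        exact ⟨hp, hne⟩)
      (by
        intro i
        exact Or.inr ⟨PX i, hPXlen i, rfl⟩)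
      b (X (Fin.last (M+1))) (g (PX (Fin.last M) ++ [b]))
      (by
        rw [hXeq (Fin.last (M+1))]
        exact ⟨f' (sX (Fin.last (M+1))), hfull, rfl⟩)
      (⟨PX (Fin.last M) ++ [b], by simp; omega, rfl⟩)
      (by
        show g (PX (Fin.last M)) ++ [b] <+: X (Fin.last (M+1))
        rw [← hXg (Fin.last M)]; exact hbX)
      (hstg.2 (PX (Fin.last M)) b hPXllen)
    calc χ X = χ (Fin.snoc (fun i : Fin (M+1) => g (PX i)) (X (Fin.last (M+1)))) := by
            rw [← hXsnoc]
      _ = χ (Fin.snoc (fun i : Fin (M+1) => g (PX i)) (g (PX (Fin.last M) ++ [b]))) := happ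
  have hCmain := main C sC hCchain hsC hCeq hb
  have hDmain := main Dch sD hDchain hsD hDeq hbD
  -- chains in the r-tree
  have hPchain : ∀ i j : Fin (M+1), i < j → P i <+: P j ∧ P i ≠ P j := by
    intro i j hij
    have hij2 : i.castSucc < j.castSucc := Fin.castSucc_lt_castSucc_iff.mpr hij
    obtain ⟨hp, hne⟩ := hCchain _ _ hij2
    rw [hCg i, hCg j] at hp hne
    exact stm_reflect hstg (hPlen i) (hPlen j) hp hne
  have hQchain : ∀ i j : Fin (M+1), i < j → Q i <+: Q j ∧ Q i ≠ Q j := by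
    intro i j hij
    have hij2 : i.castSucc < j.castSucc := Fin.castSucc_lt_castSucc_iff.mpr hij
    obtain ⟨hp, hne⟩ := hDchain _ _ hij2
    rw [hDg i, hDg j] at hp hne
    exact stm_reflect hstg (hQlen i) (hQlen j) hp hne
  have hPQ : SameTurns (M+1) P Q := by
    intro i j hij bb
    have hij2 : i.castSucc < j.castSucc := Fin.castSucc_lt_castSucc_iff.mpr hij
    have h1 : (P i ++ [bb] <+: P j) ↔ (g (P i) ++ [bb] <+: g (P j)) :=
      (stm_turn_iff hstg (hPlen i) (hPlen j)).symm
    have h2 : (Q i ++ [bb] <+: Q j) ↔ (g (Q i) ++ [bb] <+: g (Q j)) :=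
      (stm_turn_iff hstg (hQlen i) (hQlen j)).symm
    rw [h1, h2, ← hCg i, ← hCg j, ← hDg i, ← hDg j]
    exact hsame _ _ hij2 bb
  have hPin : ChainIn (M+1) d f' P :=
    ⟨hPchain, fun i => ⟨sC i.castSucc, hsC _, rfl⟩⟩
  have hQin : ChainIn (M+1) d f' Q :=
    ⟨hQchain, fun i => ⟨sD i.castSucc, hsD _, rfl⟩⟩
  have hcol := hmonof' P Q hPin hQin hPQ
  rw [hχ'] at hcol
  simp only [] at hcol
  obtain ⟨h0, h1⟩ := henc_inj _ _ _ _ hcol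
  rw [hCmain, hDmain]
  cases b
  · exact h0
  · exact h1

/-- existence of Ramsey depth for all parameters -/
lemma exists_ramsey : ∀ (m d k : ℕ), ∃ n, HasRamsey n d m k := by
  have hid : ∀ d : ℕ, SubtreeMap d d (fun s => s) :=
    fun d => ⟨fun s hs => hs, fun s b _ => List.prefix_refl _⟩
  intro m
  induction m with
  | zero =>
    intro d k
    refine ⟨d, fun χ => ⟨fun s => s, hid d, ?_⟩⟩
    intro C D _ _ _
    have : C = D := funext (fun i => i.elim0)
    rw [this]
  | succ m ih =>
    intro d k
    rcases Nat.eq_zero_or_pos k with rfl | hk1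
    · exact ⟨0, fun χ => (χ (fun _ => [])).elim0⟩
    rcases Nat.lt_or_ge k 2 with hk2 | hk2
    · -- k = 1
      refine ⟨d, fun χ => ⟨fun s => s, hid d, ?_⟩⟩
      intro C D _ _ _
      have hk : k = 1 := by omega
      subst hk
      exact Subsingleton.elim _ _
    cases m with
    | zero =>
      -- m = 1 : vertex colorings
      refine ⟨k * (d + 1), fun χ => ?_⟩
      obtain ⟨i, dep, g', hcard, hg', hmono⟩ :=
        refineTree (fun v => χ (fun _ => v)) (k * (d + 1))
      have hd : d ≤ dep := by
        rw [Fintype.card_fin] at hcard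
        have h3 : k * (d + 1) < k * (dep + 1) := by omega
        have := Nat.lt_of_mul_lt_mul_left h3
        omega
      refine ⟨g', stm_restrict hg' hd, ?_⟩
      intro C D hC hD _
      obtain ⟨sC, hsC, hCeq⟩ := hC.2 0
      obtain ⟨sD, hsD, hDeq⟩ := hD.2 0
      have hCfun : C = fun _ => g' sC := by
        funext j
        have hj : j = 0 := Fin.ext (by omega)
        rw [hj, hCeq]
      have hDfun : D = fun _ => g' sD := by
        funext j
        have hj : j = 0 := Fin.ext (by omega)
        rw [hj, hDeq]
      rw [hCfun, hDfun]
      have e1 := hmono sC (hsC.trans hd)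
      have e2 := hmono sD (hsD.trans hd)
      rw [e1, e2]
    | succ M =>
      obtain ⟨r, hr⟩ := ih d (k ^ 2)
      exact ⟨k ^ (2 * r ^ (M+1)), step M k d r hk2 hr⟩

end RamseyAux

/-- `R(d,m,k)`: the minimal depth `n` such that every `k`-coloring of `m`-chains of the
complete binary tree of depth `n` admits a type-monochromatic subtree of depth `d`. -/
noncomputable def Rchains (d m k : ℕ) : ℕ := sInf {n | HasRamsey n d m k}

/-- Recursive bound: `R(d,m,k) ≤ k^(2·R(d,m-1,k²)^(m-1))` for `m, k ≥ 2`. -/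
theorem ramsey_chains_recursive_bound (d m k : ℕ) (hm : 2 ≤ m) (hk : 2 ≤ k) :
    Rchains d m k ≤ k ^ (2 * Rchains d (m - 1) (k ^ 2) ^ (m - 1)) := by
  obtain ⟨M, rfl⟩ : ∃ M, m = M + 2 := ⟨m - 2, by omega⟩
  have hm1 : M + 2 - 1 = M + 1 := by omega
  rw [hm1]
  have hne : {n | HasRamsey n d (M+1) (k ^ 2)}.Nonempty :=
    RamseyAux.exists_ramsey (M+1) d (k ^ 2)
  have hmem : HasRamsey (Rchains d (M+1) (k ^ 2)) d (M+1) (k ^ 2) :=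
    Nat.sInf_mem hne
  have hstep := RamseyAux.step M k d (Rchains d (M+1) (k ^ 2)) hk hmem
  exact Nat.sInf_le hstep
end
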